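/- arXiv:2305.00968 — 2 statements merged into one kernel-verified Lean document; each statement's English description precedes it below -/
import Mathlib

section
/- Let P be a perfect subset of ℝ and let Y₁, …, Y_{n+1} be pairwise disjoint sets each dense in P. Then there exist perfect sets P_α for α < 2^{ℵ₀} such that each Y_k is dense in each P_α, and for α ≠ β, P_α ∩ P_β ⊆ Y₁ ∪ … ∪ Y_{n+1}. -/
/-- A "perfect set" in Shelah's sense: a closed, nowhere dense subset of `ℝ` with
no isolated points and at least two points. -/
def ShPerfect (P : Set ℝ) : Prop :=
  Perfect P ∧ IsNowhereDense P ∧ P.Nontrivial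

/-- `x` is an inner point of `P`. -/
def InnerPt (P : Set ℝ) (x : ℝ) : Prop :=
  x ∈ P ∧ ∀ ε : ℝ, 0 < ε →
    (Set.Ioo (x - ε) x ∩ P).Nonempty ∧ (Set.Ioo x (x + ε) ∩ P).Nonempty

/-- `D'` is dense in `P`. -/
def DenseInP (D' P : Set ℝ) : Prop :=
  ∀ x y : ℝ, InnerPt P x → InnerPt P y → x < y →
    ∃ z : ℝ, z ∈ D' ∧ InnerPt P z ∧ x < z ∧ z < y

namespace Shelah76

open Set Cardinal

lemma disjoint_Icc_of_lt {a b c d : ℝ} (h : b < c) : Disjoint (Set.Icc a b) (Set.Icc c d) := by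
  rw [Set.disjoint_left]
  rintro x ⟨_, h1⟩ ⟨h2, _⟩
  linarith

lemma not_countable_cantor : ¬ Countable (ℕ → Bool) := by
  intro h
  have h1 : #(ℕ → Bool) ≤ Cardinal.aleph0 := Cardinal.mk_le_aleph0_iff.mpr h
  have h2 : #(ℕ → Bool) = 2 ^ Cardinal.aleph0 := by
    rw [← Cardinal.power_def, Cardinal.mk_bool, Cardinal.mk_nat]
  rw [h2] at h1
  exact (Cardinal.cantor Cardinal.aleph0).not_ge h1

lemma exists_real_embedding : ∃ ι : ℝ → (ℕ → Bool), Function.Injective ι := by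
  have h : #ℝ = #(ℕ → Bool) := by
    rw [Cardinal.mk_real, ← Cardinal.power_def, Cardinal.mk_bool, Cardinal.mk_nat,
      Cardinal.two_power_aleph0]
  obtain ⟨e⟩ := Cardinal.eq.mp h
  exact ⟨e, e.injective⟩

lemma perfect_not_countable {C : Set ℝ} (hC : Perfect C) (hne : C.Nonempty) :
    ¬ C.Countable := by
  intro hcnt
  obtain ⟨f, hrange, -, hinj⟩ := hC.exists_nat_bool_injection hne
  have hrc : (Set.range f).Countable := hcnt.mono hrange
  haveI := hrc.to_subtype
  have : Countable (ℕ → Bool) := by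
    have hinj' : Function.Injective (fun x : ℕ → Bool => (⟨f x, Set.mem_range_self x⟩ : Set.range f)) := by
      intro a b hab
      exact hinj (congrArg Subtype.val hab)
    exact hinj'.countable
  exact not_countable_cantor this

lemma countable_bad_right (P : Set ℝ) :
    {x : ℝ | x ∈ P ∧ ∃ ε > (0:ℝ), Set.Ioo x (x + ε) ∩ P = ∅}.Countable := by
  classical
  set S := {x : ℝ | x ∈ P ∧ ∃ ε > (0:ℝ), Set.Ioo x (x + ε) ∩ P = ∅} with hS
  have key : ∀ x : S, ∃ q : ℚ, (x : ℝ) < q ∧ ∀ y : S, (x : ℝ) < y → (q : ℝ) < y := by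
    rintro ⟨x, hxP, ε, hε, hgap⟩
    obtain ⟨q, hq1, hq2⟩ := exists_rat_btwn (show x < x + ε by linarith)
    refine ⟨q, hq1, ?_⟩
    intro y hy
    rcases lt_or_ge (y : ℝ) (x + ε) with h | h
    · exfalso
      have : (y : ℝ) ∈ Set.Ioo x (x + ε) ∩ P := ⟨⟨hy, h⟩, y.2.1⟩
      rw [hgap] at this
      exact this
    · calc (q : ℝ) < x + ε := hq2
        _ ≤ y := h
  choose q hq1 hq2 using key
  have hinj : Function.Injective q := by
    intro x y hxy
    by_contra hne
    have hne' : (x : ℝ) ≠ (y : ℝ) := fun h => hne (Subtype.ext h)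
    rcases hne'.lt_or_gt with h | h
    · have h1 : (q x : ℝ) < y := hq2 x y h
      have h2 : (y : ℝ) < q y := hq1 y
      rw [hxy] at h1
      linarith
    · have h1 : (q y : ℝ) < x := hq2 y x h
      have h2 : (x : ℝ) < q x := hq1 x
      rw [← hxy] at h1
      linarith
  have : Countable S := hinj.countable
  exact Set.countable_coe_iff.mp this

lemma countable_bad_left (P : Set ℝ) :
    {x : ℝ | x ∈ P ∧ ∃ ε > (0:ℝ), Set.Ioo (x - ε) x ∩ P = ∅}.Countable := by
  classical
  set S := {x : ℝ | x ∈ P ∧ ∃ ε > (0:ℝ), Set.Ioo (x - ε) x ∩ P = ∅} with hS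
  have key : ∀ x : S, ∃ q : ℚ, (q : ℝ) < x ∧ ∀ y : S, (y : ℝ) < x → (y : ℝ) < q := by
    rintro ⟨x, hxP, ε, hε, hgap⟩
    obtain ⟨q, hq1, hq2⟩ := exists_rat_btwn (show x - ε < x by linarith)
    refine ⟨q, hq2, ?_⟩
    intro y hy
    rcases lt_or_ge (x - ε) (y : ℝ) with h | h
    · exfalso
      have : (y : ℝ) ∈ Set.Ioo (x - ε) x ∩ P := ⟨⟨h, hy⟩, y.2.1⟩
      rw [hgap] at this
      exact this
    · calc (y : ℝ) ≤ x - ε := h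
        _ < q := hq1
  choose q hq1 hq2 using key
  have hinj : Function.Injective q := by
    intro x y hxy
    by_contra hne
    have hne' : (x : ℝ) ≠ (y : ℝ) := fun h => hne (Subtype.ext h)
    rcases hne'.lt_or_gt with h | h
    · have h1 : (x : ℝ) < q y := hq2 y x h
      have h2 : (q x : ℝ) < x := hq1 x
      rw [hxy] at h2
      linarith
    · have h1 : (y : ℝ) < q x := hq2 x y h
      have h2 : (q y : ℝ) < y := hq1 y
      rw [← hxy] at h2
      linarith
  have : Countable S := hinj.countable
  exact Set.countable_coe_iff.mp this

lemma countable_noninner (P : Set ℝ) : {x : ℝ | x ∈ P ∧ ¬ InnerPt P x}.Countable := by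
  apply Set.Countable.mono ?_ ((countable_bad_left P).union (countable_bad_right P))
  rintro x ⟨hxP, hni⟩
  rw [InnerPt] at hni
  push_neg at hni
  obtain ⟨ε, hε, hor⟩ := hni hxP
  rcases Set.eq_empty_or_nonempty (Set.Ioo (x - ε) x ∩ P) with h | h
  · exact Or.inl ⟨hxP, ε, hε, h⟩
  · exact Or.inr ⟨hxP, ε, hε, hor h⟩

lemma exists_inner_Ioo_left {P : Set ℝ} (hP : Perfect P) {z : ℝ} (hz : InnerPt P z)
    {δ : ℝ} (hδ : 0 < δ) : ∃ w, InnerPt P w ∧ w ∈ Set.Ioo (z - δ) z := by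
  classical
  set S : Set ℝ := P ∩ Set.Ioo (z - δ) z with hSdef
  have hSne : S.Nonempty := by
    obtain ⟨p, hp⟩ := (hz.2 δ hδ).1
    exact ⟨p, hp.2, hp.1⟩
  have hpre : Preperfect S := by
    intro x hx
    have hacc := hP.acc x hx.1
    rw [accPt_iff_nhds] at hacc ⊢
    intro U hU
    obtain ⟨y, ⟨⟨hyU, hyI⟩, hyP⟩, hyne⟩ :=
      hacc (U ∩ Set.Ioo (z - δ) z) (Filter.inter_mem hU (Ioo_mem_nhds hx.2.1 hx.2.2))
    exact ⟨y, ⟨hyU, hyP, hyI⟩, hyne⟩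
  have hperf := hpre.perfect_closure
  have huncnt := perfect_not_countable hperf hSne.closure
  have hsub1 : closure S ⊆ P := by
    have h1 : closure S ⊆ closure P := closure_mono Set.inter_subset_left
    rwa [hP.closed.closure_eq] at h1
  have hsub2 : closure S ⊆ Set.Icc (z - δ) z := by
    apply closure_minimal ?_ isClosed_Icc
    exact fun x hx => ⟨le_of_lt hx.2.1, le_of_lt hx.2.2⟩
  have hbad : ({x : ℝ | x ∈ P ∧ ¬ InnerPt P x} ∪ {z - δ, z}).Countable :=
    (countable_noninner P).union ((Set.countable_singleton z).insert (z - δ))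
  obtain ⟨w, hwC, hwnb⟩ : (closure S \ ({x : ℝ | x ∈ P ∧ ¬ InnerPt P x} ∪ {z - δ, z})).Nonempty := by
    by_contra h
    rw [Set.not_nonempty_iff_eq_empty, Set.diff_eq_empty] at h
    exact huncnt (hbad.mono h)
  have hwP : w ∈ P := hsub1 hwC
  have hwI : InnerPt P w := by
    by_contra hni
    exact hwnb (Or.inl ⟨hwP, hni⟩)
  have hne1 : w ≠ z - δ := fun h => hwnb (Or.inr (Or.inl h))
  have hne2 : w ≠ z := fun h => hwnb (Or.inr (Or.inr h))
  have hIcc := hsub2 hwC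
  exact ⟨w, hwI, lt_of_le_of_ne hIcc.1 (Ne.symm hne1), lt_of_le_of_ne hIcc.2 hne2⟩

lemma exists_inner_Ioo_right {P : Set ℝ} (hP : Perfect P) {z : ℝ} (hz : InnerPt P z)
    {δ : ℝ} (hδ : 0 < δ) : ∃ w, InnerPt P w ∧ w ∈ Set.Ioo z (z + δ) := by
  classical
  set S : Set ℝ := P ∩ Set.Ioo z (z + δ) with hSdef
  have hSne : S.Nonempty := by
    obtain ⟨p, hp⟩ := (hz.2 δ hδ).2
    exact ⟨p, hp.2, hp.1⟩
  have hpre : Preperfect S := by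
    intro x hx
    have hacc := hP.acc x hx.1
    rw [accPt_iff_nhds] at hacc ⊢
    intro U hU
    obtain ⟨y, ⟨⟨hyU, hyI⟩, hyP⟩, hyne⟩ :=
      hacc (U ∩ Set.Ioo z (z + δ)) (Filter.inter_mem hU (Ioo_mem_nhds hx.2.1 hx.2.2))
    exact ⟨y, ⟨hyU, hyP, hyI⟩, hyne⟩
  have hperf := hpre.perfect_closure
  have huncnt := perfect_not_countable hperf hSne.closure
  have hsub1 : closure S ⊆ P := by
    have h1 : closure S ⊆ closure P := closure_mono Set.inter_subset_left
    rwa [hP.closed.closure_eq] at h1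
  have hsub2 : closure S ⊆ Set.Icc z (z + δ) := by
    apply closure_minimal ?_ isClosed_Icc
    exact fun x hx => ⟨le_of_lt hx.2.1, le_of_lt hx.2.2⟩
  have hbad : ({x : ℝ | x ∈ P ∧ ¬ InnerPt P x} ∪ {z, z + δ}).Countable :=
    (countable_noninner P).union ((Set.countable_singleton (z + δ)).insert z)
  obtain ⟨w, hwC, hwnb⟩ : (closure S \ ({x : ℝ | x ∈ P ∧ ¬ InnerPt P x} ∪ {z, z + δ})).Nonempty := by
    by_contra h
    rw [Set.not_nonempty_iff_eq_empty, Set.diff_eq_empty] at h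
    exact huncnt (hbad.mono h)
  have hwP : w ∈ P := hsub1 hwC
  have hwI : InnerPt P w := by
    by_contra hni
    exact hwnb (Or.inl ⟨hwP, hni⟩)
  have hne1 : w ≠ z := fun h => hwnb (Or.inr (Or.inl h))
  have hne2 : w ≠ z + δ := fun h => hwnb (Or.inr (Or.inr h))
  have hIcc := hsub2 hwC
  exact ⟨w, hwI, lt_of_le_of_ne hIcc.1 (Ne.symm hne1), lt_of_le_of_ne hIcc.2 hne2⟩

lemma exists_two_inner {P : Set ℝ} (hP : ShPerfect P) :
    ∃ u v : ℝ, InnerPt P u ∧ InnerPt P v ∧ u < v := by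
  obtain ⟨hperf, hnwd, hnt⟩ := hP
  have huncnt := perfect_not_countable hperf hnt.nonempty
  obtain ⟨v, hvP, hvn⟩ : (P \ {x : ℝ | x ∈ P ∧ ¬ InnerPt P x}).Nonempty := by
    by_contra h
    rw [Set.not_nonempty_iff_eq_empty, Set.diff_eq_empty] at h
    exact huncnt ((countable_noninner P).mono h)
  have hv : InnerPt P v := by
    by_contra h
    exact hvn ⟨hvP, h⟩
  obtain ⟨u, hu, hu2⟩ := exists_inner_Ioo_left hperf hv one_pos
  exact ⟨u, v, hu, hv, hu2.2⟩

lemma ladder_left {P : Set ℝ} (hP : Perfect P) {z b : ℝ} (hz : InnerPt P z) (hb : b < z) :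
    ∃ u : ℕ → ℝ, StrictMono u ∧ ∀ j, InnerPt P (u j) ∧ u j ∈ Set.Ioo b z := by
  classical
  have ht0 : ∃ x : ℝ, InnerPt P x ∧ x ∈ Set.Ioo b z := by
    obtain ⟨w, h1, h2⟩ := exists_inner_Ioo_left hP hz (show (0:ℝ) < z - b by linarith)
    refine ⟨w, h1, ?_, h2.2⟩
    have := h2.1
    linarith
  have hstep : ∀ x : {x : ℝ // InnerPt P x ∧ x ∈ Set.Ioo b z},
      ∃ y : {x : ℝ // InnerPt P x ∧ x ∈ Set.Ioo b z}, (x : ℝ) < y := by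
    rintro ⟨x, hx, hxb, hxz⟩
    obtain ⟨w, h1, h2⟩ := exists_inner_Ioo_left hP hz (show (0:ℝ) < z - x by linarith)
    have hw1 : x < w := by have := h2.1; linarith
    exact ⟨⟨w, h1, by constructor <;> [linarith; exact h2.2]⟩, hw1⟩
  choose f hf using hstep
  let t0 : {x : ℝ // InnerPt P x ∧ x ∈ Set.Ioo b z} := ⟨ht0.choose, ht0.choose_spec⟩
  refine ⟨fun j => (f^[j] t0 : ℝ), ?_, fun j => (f^[j] t0).2⟩
  apply strictMono_nat_of_lt_succ
  intro j
  rw [Function.iterate_succ_apply']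
  exact hf _

lemma ladder_right {P : Set ℝ} (hP : Perfect P) {z b : ℝ} (hz : InnerPt P z) (hb : z < b) :
    ∃ u : ℕ → ℝ, StrictAnti u ∧ ∀ j, InnerPt P (u j) ∧ u j ∈ Set.Ioo z b := by
  classical
  have ht0 : ∃ x : ℝ, InnerPt P x ∧ x ∈ Set.Ioo z b := by
    obtain ⟨w, h1, h2⟩ := exists_inner_Ioo_right hP hz (show (0:ℝ) < b - z by linarith)
    refine ⟨w, h1, h2.1, ?_⟩
    have := h2.2
    linarith
  have hstep : ∀ x : {x : ℝ // InnerPt P x ∧ x ∈ Set.Ioo z b},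
      ∃ y : {x : ℝ // InnerPt P x ∧ x ∈ Set.Ioo z b}, (y : ℝ) < x := by
    rintro ⟨x, hx, hxz, hxb⟩
    obtain ⟨w, h1, h2⟩ := exists_inner_Ioo_right hP hz (show (0:ℝ) < x - z by linarith)
    have hw1 : w < x := by have := h2.2; linarith
    exact ⟨⟨w, h1, h2.1, by linarith⟩, hw1⟩
  choose f hf using hstep
  let t0 : {x : ℝ // InnerPt P x ∧ x ∈ Set.Ioo z b} := ⟨ht0.choose, ht0.choose_spec⟩
  refine ⟨fun j => (f^[j] t0 : ℝ), ?_, fun j => (f^[j] t0).2⟩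
  apply strictAnti_nat_of_succ_lt
  intro j
  rw [Function.iterate_succ_apply']
  exact hf _

end Shelah76
namespace Shelah76

open Set

/-- `hh m = (1/2)^m`, the scale at level `m`. -/
noncomputable def hh (m : ℕ) : ℝ := (1/2 : ℝ) ^ m

lemma hh_pos (m : ℕ) : 0 < hh m := pow_pos (by norm_num) m

lemma hh_anti {m m' : ℕ} (h : m ≤ m') : hh m' ≤ hh m :=
  pow_le_pow_of_le_one (by norm_num) (by norm_num) h

lemma hh_succ_lt (m : ℕ) : hh (m + 1) < hh m := by
  have : hh (m+1) = (1/2) * hh m := by rw [hh, hh, pow_succ]; ring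
  rw [this]
  have := hh_pos m
  linarith

lemma hh_exists_lt {ε : ℝ} (hε : 0 < ε) : ∃ m : ℕ, hh m < ε := by
  obtain ⟨m, hm⟩ := exists_pow_lt_of_lt_one hε (show (1/2 : ℝ) < 1 by norm_num)
  exact ⟨m, hm⟩

variable (P : Set ℝ) {n : ℕ} (Y : Fin (n+1) → Set ℝ)

/-- data for refining the neighborhood of one marker `z` at level `m+1`:
new core endpoints `cl`, `cr` and, for each node-class `t.1` and color `t.2`,
new planted markers `pl`, `pr` on the left/right of `z`, with their cores `il`, `ir`. -/
structure ZD (n m : ℕ) where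
  cl : ℝ
  cr : ℝ
  pl : ((Fin (m+1) → Bool) × Fin (n+1)) → ℝ
  pr : ((Fin (m+1) → Bool) × Fin (n+1)) → ℝ
  il : ((Fin (m+1) → Bool) × Fin (n+1)) → ℝ × ℝ
  ir : ((Fin (m+1) → Bool) × Fin (n+1)) → ℝ × ℝ

instance (n m : ℕ) : Inhabited (ZD n m) :=
  ⟨⟨0, 0, fun _ => 0, fun _ => 0, fun _ => (0,0), fun _ => (0,0)⟩⟩

structure ZGood (m : ℕ) (z lo hi : ℝ) (d : ZD n m) : Prop where
  lo_lt : lo < d.cl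
  size_l : z - hh (m+1) < d.cl
  cl_lt : d.cl < z
  lt_cr : z < d.cr
  size_r : d.cr < z + hh (m+1)
  cr_lt : d.cr < hi
  plY : ∀ t, d.pl t ∈ Y t.2
  plInner : ∀ t, InnerPt P (d.pl t)
  plMem : ∀ t, d.pl t ∈ Set.Ioo (d.il t).1 (d.il t).2
  ilSub : ∀ t, Set.Icc (d.il t).1 (d.il t).2 ⊆ Set.Ioo lo d.cl
  ilSize : ∀ t, d.pl t - hh (m+1) < (d.il t).1 ∧ (d.il t).2 < d.pl t + hh (m+1)
  ilDisj : ∀ t t', t ≠ t' →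
    Disjoint (Set.Icc (d.il t).1 (d.il t).2) (Set.Icc (d.il t').1 (d.il t').2)
  prY : ∀ t, d.pr t ∈ Y t.2
  prInner : ∀ t, InnerPt P (d.pr t)
  prMem : ∀ t, d.pr t ∈ Set.Ioo (d.ir t).1 (d.ir t).2
  irSub : ∀ t, Set.Icc (d.ir t).1 (d.ir t).2 ⊆ Set.Ioo d.cr hi
  irSize : ∀ t, d.pr t - hh (m+1) < (d.ir t).1 ∧ (d.ir t).2 < d.pr t + hh (m+1)
  irDisj : ∀ t t', t ≠ t' →
    Disjoint (Set.Icc (d.ir t).1 (d.ir t).2) (Set.Icc (d.ir t').1 (d.ir t').2)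

lemma zgood_exists (hP : Perfect P) (hdense : ∀ k : Fin (n+1), DenseInP (Y k) P)
    (m : ℕ) (z lo hi : ℝ) (hz : InnerPt P z) (hlo : lo < z) (hhi : z < hi) :
    ∃ d : ZD n m, ZGood P Y m z lo hi d := by
  classical
  set T := (Fin (m+1) → Bool) × Fin (n+1) with hT
  set N := Fintype.card T with hN
  let e : T ≃ Fin N := Fintype.equivFin T
  let idx : T → ℕ := fun t => (e t : ℕ)
  have hidx_lt : ∀ t, idx t < N := fun t => (e t).2
  have hidx_inj : ∀ t t', t ≠ t' → idx t ≠ idx t' := by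
    intro t t' h hc
    exact h (e.injective (Fin.ext hc))
  -- left ladder
  have hbL : max lo (z - hh (m+1)) < z := max_lt hlo (by have := hh_pos (m+1); linarith)
  obtain ⟨u, hu, huj⟩ := ladder_left hP hz hbL
  -- right ladder
  have hbR : z < min hi (z + hh (m+1)) := lt_min hhi (by have := hh_pos (m+1); linarith)
  obtain ⟨v, hv, hvj⟩ := ladder_right hP hz hbR
  -- plants
  have hpl0 : ∀ t : T, ∃ p : ℝ, p ∈ Y t.2 ∧ InnerPt P p ∧ u (idx t) < p ∧ p < u (idx t + 1) :=
    fun t => hdense t.2 (u (idx t)) (u (idx t + 1)) (huj _).1 (huj _).1 (hu (Nat.lt_succ_self _))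
  choose pl hplY hplI hpl1 hpl2 using hpl0
  have hpr0 : ∀ t : T, ∃ p : ℝ, p ∈ Y t.2 ∧ InnerPt P p ∧ v (idx t + 1) < p ∧ p < v (idx t) :=
    fun t => hdense t.2 (v (idx t + 1)) (v (idx t)) (hvj _).1 (hvj _).1 (hv (Nat.lt_succ_self _))
  choose pr hprY hprI hpr1 hpr2 using hpr0
  -- cores for plants
  let il : T → ℝ × ℝ := fun t =>
    (max ((u (idx t) + pl t)/2) (pl t - hh (m+2)), min ((pl t + u (idx t + 1))/2) (pl t + hh (m+2)))
  let ir : T → ℝ × ℝ := fun t =>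
    (max ((v (idx t + 1) + pr t)/2) (pr t - hh (m+2)), min ((pr t + v (idx t))/2) (pr t + hh (m+2)))
  have hil1 : ∀ t, u (idx t) < (il t).1 ∧ (il t).1 < pl t := by
    intro t
    constructor
    · exact lt_max_iff.mpr (Or.inl (by have := hpl1 t; linarith))
    · exact max_lt (by have := hpl1 t; linarith) (by have := hh_pos (m+2); linarith)
  have hil2 : ∀ t, pl t < (il t).2 ∧ (il t).2 < u (idx t + 1) := by
    intro t
    constructor
    · exact lt_min (by have := hpl2 t; linarith) (by have := hh_pos (m+2); linarith)
    · exact min_lt_iff.mpr (Or.inl (by have := hpl2 t; linarith))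
  have hir1 : ∀ t, v (idx t + 1) < (ir t).1 ∧ (ir t).1 < pr t := by
    intro t
    constructor
    · exact lt_max_iff.mpr (Or.inl (by have := hpr1 t; linarith))
    · exact max_lt (by have := hpr1 t; linarith) (by have := hh_pos (m+2); linarith)
  have hir2 : ∀ t, pr t < (ir t).2 ∧ (ir t).2 < v (idx t) := by
    intro t
    constructor
    · exact lt_min (by have := hpr2 t; linarith) (by have := hh_pos (m+2); linarith)
    · exact min_lt_iff.mpr (Or.inl (by have := hpr2 t; linarith))
  refine ⟨⟨u N, v N, pl, pr, il, ir⟩, ?_, ?_, ?_, ?_, ?_, ?_, hplY, hplI, ?_, ?_, ?_, ?_,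
    hprY, hprI, ?_, ?_, ?_, ?_⟩
  · exact lt_of_le_of_lt (le_max_left _ _) (huj N).2.1
  · exact lt_of_le_of_lt (le_max_right _ _) (huj N).2.1
  · exact (huj N).2.2
  · exact (hvj N).2.1
  · exact lt_of_lt_of_le (hvj N).2.2 (min_le_right _ _)
  · exact lt_of_lt_of_le (hvj N).2.2 (min_le_left _ _)
  · exact fun t => ⟨(hil1 t).2, (hil2 t).1⟩
  · -- ilSub
    intro t x hx
    constructor
    · have h1 : max lo (z - hh (m+1)) < u (idx t) := (huj _).2.1
      have h2 := (hil1 t).1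
      have := le_max_left lo (z - hh (m+1))
      have := hx.1
      linarith
    · have h1 := (hil2 t).2
      have h2 : u (idx t + 1) ≤ u N := hu.monotone (hidx_lt t)
      have := hx.2
      linarith
  · -- ilSize
    intro t
    have h1 := (hil1 t).1
    have h2 := (hil2 t).2
    have hs := hh_succ_lt (m+1)
    constructor
    · have : pl t - hh (m+2) ≤ (il t).1 := le_max_right _ _
      linarith
    · have : (il t).2 ≤ pl t + hh (m+2) := min_le_right _ _
      linarith
  · -- ilDisj
    have key : ∀ t t' : T, idx t < idx t' →
        Disjoint (Set.Icc (il t).1 (il t).2) (Set.Icc (il t').1 (il t').2) := by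
      intro t t' hlt
      apply disjoint_Icc_of_lt
      have h1 := (hil2 t).2
      have h2 : u (idx t + 1) ≤ u (idx t') := hu.monotone hlt
      have h3 := (hil1 t').1
      linarith
    intro t t' ht
    rcases Nat.lt_or_ge (idx t) (idx t') with h | h
    · exact key t t' h
    · rcases Nat.lt_or_ge (idx t') (idx t) with h' | h'
      · exact (key t' t h').symm
      · exact absurd (by omega : idx t = idx t') (hidx_inj t t' ht)
  · exact fun t => ⟨(hir1 t).2, (hir2 t).1⟩
  · -- irSub
    intro t x hx
    constructor
    · have h1 : v N ≤ v (idx t + 1) := hv.antitone (hidx_lt t)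
      have h2 := (hir1 t).1
      have := hx.1
      linarith
    · have h1 := (hir2 t).2
      have h2 : v (idx t) < min hi (z + hh (m+1)) := (hvj _).2.2
      have := min_le_left hi (z + hh (m+1))
      have := hx.2
      linarith
  · -- irSize
    intro t
    have h1 := (hir1 t).1
    have h2 := (hir2 t).2
    have hs := hh_succ_lt (m+1)
    constructor
    · have : pr t - hh (m+2) ≤ (ir t).1 := le_max_right _ _
      linarith
    · have : (ir t).2 ≤ pr t + hh (m+2) := min_le_right _ _
      linarith
  · -- irDisj
    have key : ∀ t t' : T, idx t < idx t' →
        Disjoint (Set.Icc (ir t').1 (ir t').2) (Set.Icc (ir t).1 (ir t).2) := by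
      intro t t' hlt
      apply disjoint_Icc_of_lt
      have h1 := (hir2 t').2
      have h2 : v (idx t') ≤ v (idx t + 1) := hv.antitone hlt
      have h3 := (hir1 t).1
      linarith
    intro t t' ht
    rcases Nat.lt_or_ge (idx t) (idx t') with h | h
    · exact (key t t' h).symm
    · rcases Nat.lt_or_ge (idx t') (idx t) with h' | h'
      · exact key t' t h'
      · exact absurd (by omega : idx t = idx t') (hidx_inj t t' ht)

end Shelah76
namespace Shelah76

open Set

variable (P : Set ℝ) {n : ℕ} (Y : Fin (n+1) → Set ℝ)

/-- invariants of the marker system at level `m`. -/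
structure Inv (m : ℕ) (M : (ℕ → Bool) → Set ℝ) (c : ℝ → ℝ × ℝ) : Prop where
  mfin : ∀ a, (M a).Finite
  minner : ∀ a, ∀ z ∈ M a, InnerPt P z
  minY : ∀ a, ∀ z ∈ M a, ∃ k, z ∈ Y k
  mcoreL : ∀ a, ∀ z ∈ M a, z - hh m < (c z).1 ∧ (c z).1 < z
  mcoreR : ∀ a, ∀ z ∈ M a, z < (c z).2 ∧ (c z).2 < z + hh m
  mdisj : ∀ a b, ∀ z ∈ M a, ∀ z' ∈ M b, z ≠ z' →
    Disjoint (Set.Icc (c z).1 (c z).2) (Set.Icc (c z').1 (c z').2)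
  mdep : ∀ a b : ℕ → Bool, (∀ i, i < m → a i = b i) → M a = M b
  mtwo : ∀ a, ∃ z z', z ∈ M a ∧ z' ∈ M a ∧ z ≠ z'

/-- relation between consecutive levels. -/
structure Step (m : ℕ) (M : (ℕ → Bool) → Set ℝ) (c : ℝ → ℝ × ℝ)
    (M' : (ℕ → Bool) → Set ℝ) (c' : ℝ → ℝ × ℝ) : Prop where
  smono : ∀ a, M a ⊆ M' a
  scoreOld : ∀ a, ∀ z ∈ M a, (c z).1 < (c' z).1 ∧ (c' z).1 < z ∧ z < (c' z).2 ∧ (c' z).2 < (c z).2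
  scoreNew : ∀ a, ∀ w ∈ M' a, w ∉ M a →
    ∃ z ∈ M a, Set.Icc (c' w).1 (c' w).2 ⊆ Set.Ioo (c z).1 (c z).2
  splantL : ∀ a, ∀ z ∈ M a, ∀ k : Fin (n+1),
    ∃ w ∈ M' a, w ∈ Y k ∧ w ∈ Set.Ioo (c z).1 z
  splantR : ∀ a, ∀ z ∈ M a, ∀ k : Fin (n+1),
    ∃ w ∈ M' a, w ∈ Y k ∧ w ∈ Set.Ioo z (c z).2
  ssep : ∀ a b : ℕ → Bool, (∃ i, i < m + 1 ∧ a i ≠ b i) →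
    ∀ x, x ∈ M' a → x ∈ M' b → x ∈ M a ∧ x ∈ M b

lemma step_ex (hP : Perfect P) (hdense : ∀ k : Fin (n+1), DenseInP (Y k) P)
    (m : ℕ) (M : (ℕ → Bool) → Set ℝ) (c : ℝ → ℝ × ℝ) (hI : Inv P Y m M c) :
    ∃ M' c', Inv P Y (m+1) M' c' ∧ Step Y m M c M' c' := by
  classical
  set T := (Fin (m+1) → Bool) × Fin (n+1) with hT
  -- choose refinement data for each potential marker
  have hex : ∀ z : ℝ, (InnerPt P z ∧ (c z).1 < z ∧ z < (c z).2) →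
      ∃ d : ZD n m, ZGood P Y m z (c z).1 (c z).2 d :=
    fun z h => zgood_exists P Y hP hdense m z (c z).1 (c z).2 h.1 h.2.1 h.2.2
  let D : ℝ → ZD n m := fun z =>
    if h : (InnerPt P z ∧ (c z).1 < z ∧ z < (c z).2) then (hex z h).choose else default
  have hHz : ∀ a, ∀ z ∈ M a, (InnerPt P z ∧ (c z).1 < z ∧ z < (c z).2) := fun a z hz =>
    ⟨hI.minner a z hz, (hI.mcoreL a z hz).2, (hI.mcoreR a z hz).1⟩
  have hD : ∀ a, ∀ z ∈ M a, ZGood P Y m z (c z).1 (c z).2 (D z) := by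
    intro a z hz
    have h := hHz a z hz
    show ZGood P Y m z (c z).1 (c z).2 (if h' : _ then (hex z h').choose else default)
    rw [dif_pos h]
    exact (hex z h).choose_spec
  let τ : (ℕ → Bool) → (Fin (m+1) → Bool) := fun a i => a i
  let M' : (ℕ → Bool) → Set ℝ := fun a =>
    M a ∪ ⋃ z ∈ M a, ⋃ k : Fin (n+1), {(D z).pl (τ a, k), (D z).pr (τ a, k)}
  have hmem' : ∀ a x, x ∈ M' a ↔ x ∈ M a ∨
      ∃ z, z ∈ M a ∧ ∃ k : Fin (n+1), x = (D z).pl (τ a, k) ∨ x = (D z).pr (τ a, k) := by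
    intro a x
    constructor
    · intro hx
      rcases hx with h | h
      · exact Or.inl h
      · simp only [Set.mem_iUnion, Set.mem_insert_iff, Set.mem_singleton_iff,
          exists_prop] at h
        obtain ⟨z, hz, k, hk⟩ := h
        exact Or.inr ⟨z, hz, k, hk⟩
    · intro hx
      rcases hx with h | ⟨z, hz, k, hk⟩
      · exact Or.inl h
      · refine Or.inr ?_
        simp only [Set.mem_iUnion, Set.mem_insert_iff, Set.mem_singleton_iff, exists_prop]
        exact ⟨z, hz, k, hk⟩
  -- basic facts about plants
  have hself : ∀ a, ∀ z ∈ M a, z ∈ Set.Icc (c z).1 (c z).2 := by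
    intro a z hz
    exact ⟨le_of_lt (hI.mcoreL a z hz).2, le_of_lt (hI.mcoreR a z hz).1⟩
  have hplant_in : ∀ a, ∀ z ∈ M a, ∀ t : T,
      ((D z).pl t ∈ Set.Ioo (c z).1 (D z).cl) ∧ ((D z).pr t ∈ Set.Ioo (D z).cr (c z).2) := by
    intro a z hz t
    have hg := hD a z hz
    constructor
    · exact hg.ilSub t (Set.mem_Icc_of_Ioo (hg.plMem t))
    · exact hg.irSub t (Set.mem_Icc_of_Ioo (hg.prMem t))
  have hplant_core : ∀ a, ∀ z ∈ M a, ∀ t : T,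
      ((D z).pl t ∈ Set.Ioo (c z).1 (c z).2) ∧ ((D z).pr t ∈ Set.Ioo (c z).1 (c z).2) ∧
      (D z).pl t < z ∧ z < (D z).pr t := by
    intro a z hz t
    have hg := hD a z hz
    have h1 := (hplant_in a z hz t).1
    have h2 := (hplant_in a z hz t).2
    have hcl := hg.cl_lt
    have hcr := hg.lt_cr
    have h1a := h1.1
    have h1b := h1.2
    have h2a := h2.1
    have h2b := h2.2
    have hC2 := (hI.mcoreR a z hz).1
    have hC1 := (hI.mcoreL a z hz).2
    exact ⟨⟨h1a, by linarith⟩, ⟨by linarith, h2b⟩, by linarith, by linarith⟩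
  -- plants are not markers
  have hnotM : ∀ a, ∀ z ∈ M a, ∀ t : T, ∀ b,
      (D z).pl t ∉ M b ∧ (D z).pr t ∉ M b := by
    intro a z hz t b
    constructor
    · intro hw
      have hwz : (D z).pl t ≠ z := ne_of_lt (hplant_core a z hz t).2.2.1
      have hd := hI.mdisj b a _ hw z hz hwz
      exact Set.disjoint_left.mp hd (hself b _ hw)
        (Set.mem_Icc_of_Ioo (hplant_core a z hz t).1)
    · intro hw
      have hwz : (D z).pr t ≠ z := ne_of_gt (hplant_core a z hz t).2.2.2
      have hd := hI.mdisj b a _ hw z hz hwz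
      exact Set.disjoint_left.mp hd (hself b _ hw)
        (Set.mem_Icc_of_Ioo (hplant_core a z hz t).2.1)
  -- parent is unique
  have hparent : ∀ a b, ∀ z ∈ M a, ∀ z' ∈ M b, ∀ t t' : T, ∀ x : ℝ,
      (x = (D z).pl t ∨ x = (D z).pr t) → (x = (D z').pl t' ∨ x = (D z').pr t') → z = z' := by
    intro a b z hz z' hz' t t' x h1 h2
    by_contra hne
    have hd := hI.mdisj a b z hz z' hz' hne
    have hx1 : x ∈ Set.Icc (c z).1 (c z).2 := by
      rcases h1 with h | h <;> rw [h]
      · exact Set.mem_Icc_of_Ioo (hplant_core a z hz t).1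
      · exact Set.mem_Icc_of_Ioo (hplant_core a z hz t).2.1
    have hx2 : x ∈ Set.Icc (c z').1 (c z').2 := by
      rcases h2 with h | h <;> rw [h]
      · exact Set.mem_Icc_of_Ioo (hplant_core b z' hz' t').1
      · exact Set.mem_Icc_of_Ioo (hplant_core b z' hz' t').2.1
    exact Set.disjoint_left.mp hd hx1 hx2
  -- zone uniqueness for a fixed parent
  have hzoneL : ∀ a, ∀ z ∈ M a, ∀ t t' : T, (D z).pl t = (D z).pl t' → t = t' := by
    intro a z hz t t' hEq
    by_contra hne
    have hg := hD a z hz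
    have hd := hg.ilDisj t t' hne
    have h1 : (D z).pl t ∈ Set.Icc ((D z).il t).1 ((D z).il t).2 :=
      Set.mem_Icc_of_Ioo (hg.plMem t)
    have h2 : (D z).pl t ∈ Set.Icc ((D z).il t').1 ((D z).il t').2 := by
      rw [hEq]; exact Set.mem_Icc_of_Ioo (hg.plMem t')
    exact Set.disjoint_left.mp hd h1 h2
  have hzoneR : ∀ a, ∀ z ∈ M a, ∀ t t' : T, (D z).pr t = (D z).pr t' → t = t' := by
    intro a z hz t t' hEq
    by_contra hne
    have hg := hD a z hz
    have hd := hg.irDisj t t' hne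
    have h1 : (D z).pr t ∈ Set.Icc ((D z).ir t).1 ((D z).ir t).2 :=
      Set.mem_Icc_of_Ioo (hg.prMem t)
    have h2 : (D z).pr t ∈ Set.Icc ((D z).ir t').1 ((D z).ir t').2 := by
      rw [hEq]; exact Set.mem_Icc_of_Ioo (hg.prMem t')
    exact Set.disjoint_left.mp hd h1 h2
  have hzoneLR : ∀ a, ∀ z ∈ M a, ∀ t t' : T, (D z).pl t ≠ (D z).pr t' := by
    intro a z hz t t' hEq
    have h1 := (hplant_core a z hz t).2.2.1
    have h2 := (hplant_core a z hz t').2.2.2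
    rw [hEq] at h1
    linarith
  -- the new core function
  have hpc0 : ∀ x : ℝ, ∃ q : ℝ × ℝ, ∀ b, ∀ z' ∈ M b, ∀ t' : T,
      (x = (D z').pl t' → q = (D z').il t') ∧ (x = (D z').pr t' → q = (D z').ir t') := by
    intro x
    by_cases h : ∃ z t, (∃ a, z ∈ M a) ∧ (x = (D z).pl t ∨ x = (D z).pr t)
    · obtain ⟨z, t, ⟨a, hz⟩, hor⟩ := h
      refine ⟨if x = (D z).pl t then (D z).il t else (D z).ir t, ?_⟩
      intro b z' hz' t'
      constructor
      · intro hx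
        have hzz : z = z' := hparent a b z hz z' hz' t t' x hor (Or.inl hx)
        subst hzz
        rcases hor with h0 | h0
        · have ht' : t = t' := hzoneL a z hz t t' (h0.symm.trans hx)
          rw [if_pos h0, ht']
        · exact absurd (hx.symm.trans h0) (hzoneLR a z hz t' t)
      · intro hx
        have hzz : z = z' := hparent a b z hz z' hz' t t' x hor (Or.inr hx)
        subst hzz
        rcases hor with h0 | h0
        · exact absurd (h0.symm.trans hx) (hzoneLR a z hz t t')
        · have ht' : t = t' := hzoneR a z hz t t' (h0.symm.trans hx)
          rw [if_neg ?_, ht']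
          intro hcon
          exact hzoneLR a z hz t t (hcon.symm.trans h0)
    · refine ⟨(0,0), ?_⟩
      intro b z hz t
      exact ⟨fun hx => absurd ⟨z, t, ⟨b, hz⟩, Or.inl hx⟩ h,
             fun hx => absurd ⟨z, t, ⟨b, hz⟩, Or.inr hx⟩ h⟩
  choose pc hpc using hpc0
  let c' : ℝ → ℝ × ℝ := fun x => if ∃ a, x ∈ M a then ((D x).cl, (D x).cr) else pc x
  have hc'_old : ∀ a, ∀ z ∈ M a, c' z = ((D z).cl, (D z).cr) := by
    intro a z hz
    show (if _ then _ else _) = _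
    rw [if_pos ⟨a, hz⟩]
  have hc'_pl : ∀ a, ∀ z ∈ M a, ∀ t : T, c' ((D z).pl t) = (D z).il t := by
    intro a z hz t
    show (if _ then _ else _) = _
    rw [if_neg ?_]
    · exact (hpc ((D z).pl t) a z hz t).1 rfl
    · rintro ⟨b, hb⟩
      exact (hnotM a z hz t b).1 hb
  have hc'_pr : ∀ a, ∀ z ∈ M a, ∀ t : T, c' ((D z).pr t) = (D z).ir t := by
    intro a z hz t
    show (if _ then _ else _) = _
    rw [if_neg ?_]
    · exact (hpc ((D z).pr t) a z hz t).2 rfl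
    · rintro ⟨b, hb⟩
      exact (hnotM a z hz t b).2 hb
  -- subset facts for cores
  have subOld : ∀ a, ∀ z ∈ M a,
      Set.Icc (c' z).1 (c' z).2 ⊆ Set.Icc (c z).1 (c z).2 := by
    intro a z hz
    rw [hc'_old a z hz]
    have hg := hD a z hz
    exact Set.Icc_subset_Icc (le_of_lt hg.lo_lt) (le_of_lt hg.cr_lt)
  have subPl : ∀ a, ∀ z ∈ M a, ∀ t : T,
      Set.Icc (c' ((D z).pl t)).1 (c' ((D z).pl t)).2 ⊆ Set.Ioo (c z).1 (D z).cl := by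
    intro a z hz t
    rw [hc'_pl a z hz t]
    exact (hD a z hz).ilSub t
  have subPr : ∀ a, ∀ z ∈ M a, ∀ t : T,
      Set.Icc (c' ((D z).pr t)).1 (c' ((D z).pr t)).2 ⊆ Set.Ioo (D z).cr (c z).2 := by
    intro a z hz t
    rw [hc'_pr a z hz t]
    exact (hD a z hz).irSub t
  have subPlant : ∀ a, ∀ z ∈ M a, ∀ t : T, ∀ x,
      (x = (D z).pl t ∨ x = (D z).pr t) →
      Set.Icc (c' x).1 (c' x).2 ⊆ Set.Ioo (c z).1 (c z).2 := by
    intro a z hz t x hx y hy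
    have hg := hD a z hz
    have hcl := hg.cl_lt
    have hcr := hg.lt_cr
    have hC2 := (hI.mcoreR a z hz).1
    have hC1 := (hI.mcoreL a z hz).2
    rcases hx with h | h <;> subst h
    · have := subPl a z hz t hy
      exact ⟨this.1, by have := this.2; linarith⟩
    · have := subPr a z hz t hy
      exact ⟨by have := this.1; linarith, this.2⟩
  -- disjointness helpers
  have hdisjOP : ∀ a b, ∀ x ∈ M a, ∀ z' ∈ M b, ∀ t : T, ∀ x',
      (x' = (D z').pl t ∨ x' = (D z').pr t) →
      Disjoint (Set.Icc (c' x).1 (c' x).2) (Set.Icc (c' x').1 (c' x').2) := by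
    intro a b x hx z' hz' t x' hx'
    by_cases hzx : z' = x
    · subst hzx
      rw [Set.disjoint_left]
      intro y hy1 hy2
      rw [hc'_old a z' hx] at hy1
      rcases hx' with h | h <;> subst h
      · have h2 := subPl b z' hz' t hy2
        have h1 := hy1.1
        have := h2.2
        simp only at h1
        linarith
      · have h2 := subPr b z' hz' t hy2
        have h1 := hy1.2
        have := h2.1
        simp only at h1
        linarith
    · have hne : x ≠ z' := fun h => hzx h.symm
      exact (hI.mdisj a b x hx z' hz' hne).mono (subOld a x hx)
        ((subPlant b z' hz' t x' hx').trans Set.Ioo_subset_Icc_self)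
  have hdisjPP : ∀ a b, ∀ z ∈ M a, ∀ z' ∈ M b, ∀ t t' : T, ∀ x x',
      (x = (D z).pl t ∨ x = (D z).pr t) → (x' = (D z').pl t' ∨ x' = (D z').pr t') →
      x ≠ x' →
      Disjoint (Set.Icc (c' x).1 (c' x).2) (Set.Icc (c' x').1 (c' x').2) := by
    intro a b z hz z' hz' t t' x x' hx hx' hne
    by_cases hzz : z = z'
    · subst hzz
      have hg := hD a z hz
      rcases hx with h | h <;> rcases hx' with h' | h' <;> subst h <;> subst h'
      · have htt : t ≠ t' := fun h => hne (by rw [h])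
        rw [hc'_pl a z hz t, hc'_pl b z hz' t']
        exact hg.ilDisj t t' htt
      · rw [Set.disjoint_left]
        intro y hy1 hy2
        have h1 := subPl a z hz t hy1
        have h2 := subPr b z hz' t' hy2
        have hcl := hg.cl_lt
        have hcr := hg.lt_cr
        have := h1.2
        have := h2.1
        linarith
      · rw [Set.disjoint_left]
        intro y hy1 hy2
        have h1 := subPr a z hz t hy1
        have h2 := subPl b z hz' t' hy2
        have hcl := hg.cl_lt
        have hcr := hg.lt_cr
        have := h1.1
        have := h2.2
        linarith
      · have htt : t ≠ t' := fun h => hne (by rw [h])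
        rw [hc'_pr a z hz t, hc'_pr b z hz' t']
        exact hg.irDisj t t' htt
    · exact (hI.mdisj a b z hz z' hz' hzz).mono
        ((subPlant a z hz t x hx).trans Set.Ioo_subset_Icc_self)
        ((subPlant b z' hz' t' x' hx').trans Set.Ioo_subset_Icc_self)
  refine ⟨M', c', ⟨?_, ?_, ?_, ?_, ?_, ?_, ?_, ?_⟩, ⟨?_, ?_, ?_, ?_, ?_, ?_⟩⟩
  · -- mfin
    intro a
    apply Set.Finite.union (hI.mfin a)
    apply Set.Finite.biUnion (hI.mfin a)
    intro z _
    apply Set.finite_iUnion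
    intro k
    exact (Set.finite_singleton _).insert _
  · -- minner
    intro a x hx
    rcases (hmem' a x).mp hx with h | ⟨z, hz, k, hk⟩
    · exact hI.minner a x h
    · rcases hk with h | h <;> subst h
      · exact (hD a z hz).plInner _
      · exact (hD a z hz).prInner _
  · -- minY
    intro a x hx
    rcases (hmem' a x).mp hx with h | ⟨z, hz, k, hk⟩
    · exact hI.minY a x h
    · rcases hk with h | h <;> subst h
      · exact ⟨k, (hD a z hz).plY (τ a, k)⟩
      · exact ⟨k, (hD a z hz).prY (τ a, k)⟩
  · -- mcoreL
    intro a x hx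
    rcases (hmem' a x).mp hx with h | ⟨z, hz, k, hk⟩
    · rw [hc'_old a x h]
      exact ⟨(hD a x h).size_l, (hD a x h).cl_lt⟩
    · rcases hk with h | h <;> subst h
      · rw [hc'_pl a z hz (τ a, k)]
        exact ⟨((hD a z hz).ilSize (τ a, k)).1, ((hD a z hz).plMem (τ a, k)).1⟩
      · rw [hc'_pr a z hz (τ a, k)]
        exact ⟨((hD a z hz).irSize (τ a, k)).1, ((hD a z hz).prMem (τ a, k)).1⟩
  · -- mcoreR
    intro a x hx
    rcases (hmem' a x).mp hx with h | ⟨z, hz, k, hk⟩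
    · rw [hc'_old a x h]
      exact ⟨(hD a x h).lt_cr, (hD a x h).size_r⟩
    · rcases hk with h | h <;> subst h
      · rw [hc'_pl a z hz (τ a, k)]
        exact ⟨((hD a z hz).plMem (τ a, k)).2, ((hD a z hz).ilSize (τ a, k)).2⟩
      · rw [hc'_pr a z hz (τ a, k)]
        exact ⟨((hD a z hz).prMem (τ a, k)).2, ((hD a z hz).irSize (τ a, k)).2⟩
  · -- mdisj
    intro a b x hxa x' hxb hne
    rcases (hmem' a x).mp hxa with h1 | ⟨z, hz, k, hk⟩ <;>
      rcases (hmem' b x').mp hxb with h2 | ⟨z', hz', k', hk'⟩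
    · exact (hI.mdisj a b x h1 x' h2 hne).mono (subOld a x h1) (subOld b x' h2)
    · exact hdisjOP a b x h1 z' hz' (τ b, k') x' hk'
    · exact (hdisjOP b a x' h2 z hz (τ a, k) x hk).symm
    · exact hdisjPP a b z hz z' hz' (τ a, k) (τ b, k') x x' hk hk' hne
  · -- mdep
    intro a b h
    have hM : M a = M b := hI.mdep a b (fun i hi => h i (Nat.lt_succ_of_lt hi))
    have hτ : τ a = τ b := funext fun i => h i i.isLt
    show M a ∪ _ = M b ∪ _
    rw [hM, hτ]
  · -- mtwo
    intro a
    obtain ⟨z, z', h1, h2, h3⟩ := hI.mtwo a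
    exact ⟨z, z', Or.inl h1, Or.inl h2, h3⟩
  · -- smono
    intro a
    exact Set.subset_union_left
  · -- scoreOld
    intro a z hz
    rw [hc'_old a z hz]
    exact ⟨(hD a z hz).lo_lt, (hD a z hz).cl_lt, (hD a z hz).lt_cr, (hD a z hz).cr_lt⟩
  · -- scoreNew
    intro a w hw hnw
    rcases (hmem' a w).mp hw with h | ⟨z, hz, k, hk⟩
    · exact absurd h hnw
    · exact ⟨z, hz, subPlant a z hz (τ a, k) w hk⟩
  · -- splantL
    intro a z hz k
    refine ⟨(D z).pl (τ a, k), (hmem' a _).mpr (Or.inr ⟨z, hz, k, Or.inl rfl⟩),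
      (hD a z hz).plY (τ a, k), ?_⟩
    have h1 := (hplant_in a z hz (τ a, k)).1
    have hcl := (hD a z hz).cl_lt
    exact ⟨h1.1, by have := h1.2; linarith⟩
  · -- splantR
    intro a z hz k
    refine ⟨(D z).pr (τ a, k), (hmem' a _).mpr (Or.inr ⟨z, hz, k, Or.inr rfl⟩),
      (hD a z hz).prY (τ a, k), ?_⟩
    have h1 := (hplant_in a z hz (τ a, k)).2
    have hcr := (hD a z hz).lt_cr
    exact ⟨by have := h1.1; linarith, h1.2⟩
  · -- ssep
    intro a b hdiff x hxa hxb
    obtain ⟨i, hi, hab⟩ := hdiff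
    have hττ : τ a ≠ τ b := by
      intro h
      exact hab (congrFun h ⟨i, hi⟩)
    rcases (hmem' a x).mp hxa with h1 | ⟨z, hz, k, hk⟩ <;>
      rcases (hmem' b x).mp hxb with h2 | ⟨z', hz', k', hk'⟩
    · exact ⟨h1, h2⟩
    · exfalso
      rcases hk' with h | h <;> rw [h] at h1
      · exact (hnotM b z' hz' (τ b, k') a).1 h1
      · exact (hnotM b z' hz' (τ b, k') a).2 h1
    · exfalso
      rcases hk with h | h <;> rw [h] at h2
      · exact (hnotM a z hz (τ a, k) b).1 h2
      · exact (hnotM a z hz (τ a, k) b).2 h2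
    · exfalso
      have hzz : z = z' := hparent a b z hz z' hz' (τ a, k) (τ b, k') x hk hk'
      subst hzz
      rcases hk with h | h <;> rcases hk' with h' | h'
      · have := hzoneL a z hz (τ a, k) (τ b, k') (h.symm.trans h')
        exact hττ (congrArg Prod.fst this)
      · exact hzoneLR a z hz (τ a, k) (τ b, k') (h.symm.trans h')
      · exact hzoneLR a z hz (τ b, k') (τ a, k) (h'.symm.trans h)
      · have := hzoneR a z hz (τ a, k) (τ b, k') (h.symm.trans h')
        exact hττ (congrArg Prod.fst this)
end Shelah76
namespace Shelah76

open Set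

lemma base_ex (P : Set ℝ) {n : ℕ} (Y : Fin (n+1) → Set ℝ) (hP : ShPerfect P)
    (hdense : ∀ k : Fin (n+1), DenseInP (Y k) P) :
    ∃ (M : (ℕ → Bool) → Set ℝ) (c : ℝ → ℝ × ℝ), Inv P Y 0 M c := by
  obtain ⟨u, v, hu, hv, huv⟩ := exists_two_inner hP
  obtain ⟨p, hpY, hpI, hp1, hp2⟩ := hdense 0 u v hu hv huv
  obtain ⟨q, hqY, hqI, hq1, hq2⟩ := hdense 0 p v hpI hv hp2
  set δ := min (q - p) 1 / 3 with hδdef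
  have hmin : 0 < min (q - p) 1 := lt_min (by linarith) one_pos
  have hδpos : 0 < δ := by rw [hδdef]; linarith
  have hδ1 : δ < 1 := by
    have := min_le_right (q - p) 1
    rw [hδdef]; linarith
  have hδqp : 2 * δ < q - p := by
    have := min_le_left (q - p) 1
    rw [hδdef]; linarith
  refine ⟨fun _ => {p, q}, fun x => (x - δ, x + δ), ?_, ?_, ?_, ?_, ?_, ?_, ?_, ?_⟩
  · intro a
    exact (Set.finite_singleton q).insert p
  · intro a z hz
    rcases hz with h | h
    · subst h; exact hpI
    · rw [Set.mem_singleton_iff] at h; subst h; exact hqI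
  · intro a z hz
    rcases hz with h | h
    · subst h; exact ⟨0, hpY⟩
    · rw [Set.mem_singleton_iff] at h; subst h; exact ⟨0, hqY⟩
  · intro a z _
    constructor
    · show z - hh 0 < z - δ
      rw [hh, pow_zero]
      linarith
    · show z - δ < z
      linarith
  · intro a z _
    constructor
    · show z < z + δ
      linarith
    · show z + δ < z + hh 0
      rw [hh, pow_zero]
      linarith
  · intro a b z hz z' hz' hne
    have key : ∀ w w' : ℝ, w = p → w' = q →
        Disjoint (Set.Icc (w - δ) (w + δ)) (Set.Icc (w' - δ) (w' + δ)) := by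
      intro w w' hw hw'
      subst hw; subst hw'
      exact disjoint_Icc_of_lt (by linarith)
    rcases hz with h | h <;> rcases hz' with h' | h'
    · rw [Set.mem_singleton_iff.symm] at h h'
      exact absurd (h.trans h'.symm) hne
    · rw [Set.mem_singleton_iff] at h'
      exact key z z' h h'
    · rw [Set.mem_singleton_iff] at h
      exact (key z' z h' h).symm
    · rw [Set.mem_singleton_iff] at h h'
      exact absurd (h.trans h'.symm) hne
  · intro a b _
    rfl
  · intro a
    exact ⟨p, q, Or.inl rfl, Or.inr rfl, ne_of_lt hq1⟩

variable (P : Set ℝ) {n : ℕ} (Y : Fin (n+1) → Set ℝ) (hP : ShPerfect P)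
  (hdense : ∀ k : Fin (n+1), DenseInP (Y k) P)

noncomputable def chain :
    (m : ℕ) → {s : ((ℕ → Bool) → Set ℝ) × (ℝ → ℝ × ℝ) // Inv P Y m s.1 s.2}
  | 0 => ⟨⟨(base_ex P Y hP hdense).choose, (base_ex P Y hP hdense).choose_spec.choose⟩,
      (base_ex P Y hP hdense).choose_spec.choose_spec⟩
  | m+1 =>
    let s := chain m
    ⟨⟨(step_ex P Y hP.1 hdense m s.1.1 s.1.2 s.2).choose,
      (step_ex P Y hP.1 hdense m s.1.1 s.1.2 s.2).choose_spec.choose⟩,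
      (step_ex P Y hP.1 hdense m s.1.1 s.1.2 s.2).choose_spec.choose_spec.1⟩

noncomputable def MM (m : ℕ) : (ℕ → Bool) → Set ℝ := (chain P Y hP hdense m).1.1

noncomputable def cc (m : ℕ) : ℝ → ℝ × ℝ := (chain P Y hP hdense m).1.2

lemma hInv (m : ℕ) : Inv P Y m (MM P Y hP hdense m) (cc P Y hP hdense m) :=
  (chain P Y hP hdense m).2

lemma hStep (m : ℕ) : Step Y m (MM P Y hP hdense m) (cc P Y hP hdense m)
    (MM P Y hP hdense (m+1)) (cc P Y hP hdense (m+1)) := by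
  have h := (step_ex P Y hP.1 hdense m (chain P Y hP hdense m).1.1
    (chain P Y hP hdense m).1.2 (chain P Y hP hdense m).2).choose_spec.choose_spec.2
  exact h

noncomputable def UU (m : ℕ) (a : ℕ → Bool) : Set ℝ :=
  ⋃ z ∈ MM P Y hP hdense m a, Set.Icc (cc P Y hP hdense m z).1 (cc P Y hP hdense m z).2

noncomputable def PA (a : ℕ → Bool) : Set ℝ := P ∩ ⋂ m, UU P Y hP hdense m a

lemma UU_closed (m : ℕ) (a : ℕ → Bool) : IsClosed (UU P Y hP hdense m a) :=
  Set.Finite.isClosed_biUnion ((hInv P Y hP hdense m).mfin a) (fun _ _ => isClosed_Icc)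

lemma MM_mono {m m' : ℕ} (h : m ≤ m') (a : ℕ → Bool) :
    MM P Y hP hdense m a ⊆ MM P Y hP hdense m' a := by
  induction m', h using Nat.le_induction with
  | base => exact subset_rfl
  | succ m' hm ih => exact ih.trans ((hStep P Y hP hdense m').smono a)

lemma UU_anti (m : ℕ) (a : ℕ → Bool) :
    UU P Y hP hdense (m+1) a ⊆ UU P Y hP hdense m a := by
  intro x hx
  rw [UU, Set.mem_iUnion₂] at hx
  obtain ⟨w, hw, hxI⟩ := hx
  rw [UU, Set.mem_iUnion₂]
  by_cases hold : w ∈ MM P Y hP hdense m a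
  · refine ⟨w, hold, ?_⟩
    have hs := (hStep P Y hP hdense m).scoreOld a w hold
    exact Set.Icc_subset_Icc (le_of_lt hs.1) (le_of_lt hs.2.2.2) hxI
  · obtain ⟨z, hz, hsub⟩ := (hStep P Y hP hdense m).scoreNew a w hw hold
    exact ⟨z, hz, Set.Ioo_subset_Icc_self (hsub hxI)⟩

lemma UU_anti_le {m m' : ℕ} (h : m ≤ m') (a : ℕ → Bool) :
    UU P Y hP hdense m' a ⊆ UU P Y hP hdense m a := by
  induction m', h using Nat.le_induction with
  | base => exact subset_rfl
  | succ m' hm ih => exact (UU_anti P Y hP hdense m' a).trans ih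

lemma marker_in_PA {m : ℕ} {a : ℕ → Bool} {z : ℝ} (hz : z ∈ MM P Y hP hdense m a) :
    z ∈ PA P Y hP hdense a := by
  refine ⟨((hInv P Y hP hdense m).minner a z hz).1, Set.mem_iInter.mpr fun m' => ?_⟩
  rcases le_total m m' with h | h
  · have hz' : z ∈ MM P Y hP hdense m' a := MM_mono P Y hP hdense h a hz
    rw [UU, Set.mem_iUnion₂]
    refine ⟨z, hz', ?_⟩
    exact ⟨le_of_lt ((hInv P Y hP hdense m').mcoreL a z hz').2,
      le_of_lt ((hInv P Y hP hdense m').mcoreR a z hz').1⟩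
  · apply UU_anti_le P Y hP hdense h a
    rw [UU, Set.mem_iUnion₂]
    refine ⟨z, hz, ?_⟩
    exact ⟨le_of_lt ((hInv P Y hP hdense m).mcoreL a z hz).2,
      le_of_lt ((hInv P Y hP hdense m).mcoreR a z hz).1⟩

lemma marker_inner {m : ℕ} {a : ℕ → Bool} {z : ℝ} (hz : z ∈ MM P Y hP hdense m a) :
    InnerPt (PA P Y hP hdense a) z := by
  refine ⟨marker_in_PA P Y hP hdense hz, fun ε hε => ⟨?_, ?_⟩⟩
  · obtain ⟨m₁, hm₁⟩ := hh_exists_lt hε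
    have hle : hh (max m m₁) ≤ hh m₁ := hh_anti (le_max_right m m₁)
    have hz' : z ∈ MM P Y hP hdense (max m m₁) a :=
      MM_mono P Y hP hdense (le_max_left m m₁) a hz
    obtain ⟨w, hw, _, hwI⟩ := (hStep P Y hP hdense (max m m₁)).splantL a z hz' 0
    have hc := ((hInv P Y hP hdense (max m m₁)).mcoreL a z hz').1
    refine ⟨w, ⟨?_, hwI.2⟩, marker_in_PA P Y hP hdense hw⟩
    have := hwI.1
    linarith
  · obtain ⟨m₁, hm₁⟩ := hh_exists_lt hε
    have hle : hh (max m m₁) ≤ hh m₁ := hh_anti (le_max_right m m₁)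
    have hz' : z ∈ MM P Y hP hdense (max m m₁) a :=
      MM_mono P Y hP hdense (le_max_left m m₁) a hz
    obtain ⟨w, hw, _, hwI⟩ := (hStep P Y hP hdense (max m m₁)).splantR a z hz' 0
    have hc := ((hInv P Y hP hdense (max m m₁)).mcoreR a z hz').2
    refine ⟨w, ⟨hwI.1, ?_⟩, marker_in_PA P Y hP hdense hw⟩
    have := hwI.2
    linarith

lemma near_marker {a : ℕ → Bool} {x : ℝ} (hx : x ∈ PA P Y hP hdense a) (m : ℕ) :
    ∃ z, z ∈ MM P Y hP hdense m a ∧ x ∈ Set.Icc (cc P Y hP hdense m z).1 (cc P Y hP hdense m z).2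
      ∧ z - hh m < x ∧ x < z + hh m := by
  have hU : x ∈ UU P Y hP hdense m a := Set.mem_iInter.mp hx.2 m
  rw [UU, Set.mem_iUnion₂] at hU
  obtain ⟨z, hz, hxI⟩ := hU
  have h1 := ((hInv P Y hP hdense m).mcoreL a z hz).1
  have h2 := ((hInv P Y hP hdense m).mcoreR a z hz).2
  have := hxI.1
  have := hxI.2
  exact ⟨z, hz, hxI, by linarith, by linarith⟩

lemma PA_perfect (a : ℕ → Bool) : ShPerfect (PA P Y hP hdense a) := by
  refine ⟨⟨?_, ?_⟩, ?_, ?_⟩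
  · exact hP.1.closed.inter (isClosed_iInter (fun m => UU_closed P Y hP hdense m a))
  · intro x hx
    rw [accPt_iff_nhds]
    intro U hU
    rw [Metric.mem_nhds_iff] at hU
    obtain ⟨ε, hε, hball⟩ := hU
    obtain ⟨m₁, hm₁⟩ := hh_exists_lt (half_pos hε)
    obtain ⟨z, hz, hxI, hb1, hb2⟩ := near_marker P Y hP hdense hx m₁
    by_cases hzx : z = x
    · subst hzx
      obtain ⟨w, hw, _, hwI⟩ := (hStep P Y hP hdense m₁).splantL a z hz 0
      have hc := ((hInv P Y hP hdense m₁).mcoreL a z hz).1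
      refine ⟨w, ⟨hball ?_, marker_in_PA P Y hP hdense hw⟩, ne_of_lt hwI.2⟩
      rw [Metric.mem_ball, Real.dist_eq, abs_sub_lt_iff]
      have := hwI.1
      have := hwI.2
      constructor <;> linarith
    · refine ⟨z, ⟨hball ?_, marker_in_PA P Y hP hdense hz⟩, hzx⟩
      rw [Metric.mem_ball, Real.dist_eq, abs_sub_lt_iff]
      constructor <;> linarith
  · have h1 : closure (PA P Y hP hdense a) ⊆ closure P := closure_mono Set.inter_subset_left
    have h2 := interior_mono h1
    rw [hP.2.1] at h2
    exact eq_empty_of_subset_empty h2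
  · obtain ⟨z, z', h1, h2, h3⟩ := (hInv P Y hP hdense 0).mtwo a
    exact ⟨z, marker_in_PA P Y hP hdense h1, z', marker_in_PA P Y hP hdense h2, h3⟩

lemma PA_dense (a : ℕ → Bool) (k : Fin (n+1)) : DenseInP (Y k) (PA P Y hP hdense a) := by
  intro x y hx hy hxy
  obtain ⟨p, hp⟩ := (hy.2 (y - x) (by linarith)).1
  have hx1 : x < p := by
    have := hp.1.1
    linarith
  have hp2 : p < y := hp.1.2
  have hpPA := hp.2
  have hd : (0:ℝ) < min (p - x) (y - p) := lt_min (by linarith) (by linarith)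
  obtain ⟨m₁, hm₁⟩ := hh_exists_lt (half_pos hd)
  obtain ⟨z, hz, _, hb1, hb2⟩ := near_marker P Y hP hdense hpPA m₁
  obtain ⟨w, hw, hwY, hwI⟩ := (hStep P Y hP hdense m₁).splantL a z hz k
  have hc := ((hInv P Y hP hdense m₁).mcoreL a z hz).1
  have hw1 := hwI.1
  have hw2 := hwI.2
  have hmin1 : min (p - x) (y - p) ≤ p - x := min_le_left _ _
  have hmin2 : min (p - x) (y - p) ≤ y - p := min_le_right _ _
  refine ⟨w, hwY, marker_inner P Y hP hdense hw, by linarith, by linarith⟩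

lemma PA_sep (a b : ℕ → Bool) (hex : ∃ i, a i ≠ b i) :
    PA P Y hP hdense a ∩ PA P Y hP hdense b ⊆ ⋃ k, Y k := by
  classical
  rintro x ⟨hxa, hxb⟩
  set m₀ := Nat.find hex with hm₀def
  have hm₀ : a m₀ ≠ b m₀ := Nat.find_spec hex
  have descend : ∀ j, ∀ z, z ∈ MM P Y hP hdense (m₀ + j) a → z ∈ MM P Y hP hdense (m₀ + j) b →
      z ∈ MM P Y hP hdense m₀ a := by
    intro j
    induction j with
    | zero => exact fun z h _ => h
    | succ j ih =>
      intro z h1 h2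
      have hs := (hStep P Y hP hdense (m₀ + j)).ssep a b ⟨m₀, by omega, hm₀⟩ z h1 h2
      exact ih z hs.1 hs.2
  have hclosed : IsClosed (MM P Y hP hdense m₀ a) := ((hInv P Y hP hdense m₀).mfin a).isClosed
  have hxF : x ∈ MM P Y hP hdense m₀ a := by
    rw [← hclosed.closure_eq, Metric.mem_closure_iff]
    intro ε hε
    obtain ⟨m₁, hm₁⟩ := hh_exists_lt hε
    have hle : hh (m₀ + m₁) ≤ hh m₁ := hh_anti (Nat.le_add_left m₁ m₀)
    obtain ⟨z, hza, hzIa, hb1, hb2⟩ := near_marker P Y hP hdense hxa (m₀ + m₁)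
    obtain ⟨z', hzb, hzIb, hb1', hb2'⟩ := near_marker P Y hP hdense hxb (m₀ + m₁)
    have hzz : z = z' := by
      by_contra hne
      exact Set.disjoint_left.mp
        ((hInv P Y hP hdense (m₀ + m₁)).mdisj a b z hza z' hzb hne) hzIa hzIb
    subst hzz
    refine ⟨z, descend m₁ z hza hzb, ?_⟩
    rw [Real.dist_eq, abs_sub_lt_iff]
    constructor <;> linarith
  obtain ⟨k, hk⟩ := (hInv P Y hP hdense m₀).minY a x hxF
  exact Set.mem_iUnion.mpr ⟨k, hk⟩

end Shelah76

/-- (Shelah, proof of Lemma 7.6, claim (*).) If `Y₁, …, Y_{n+1}` are pairwise disjoint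
sets, each dense in the perfect set `P`, then there are `2^ℵ₀` perfect sets `P_α`,
each having every `Y_k` dense in it, with `P_α ∩ P_β ⊆ ⋃ₖ Yₖ` for `α ≠ β`. -/
theorem exists_continuum_many_almost_disjoint_perfect_sets
    (P : Set ℝ) (hP : ShPerfect P) (n : ℕ) (Y : Fin (n + 1) → Set ℝ)
    (hdisj : ∀ k l : Fin (n + 1), k ≠ l → Y k ∩ Y l = ∅)
    (hdense : ∀ k : Fin (n + 1), DenseInP (Y k) P) :
    ∃ Pf : ℝ → Set ℝ,
      (∀ a : ℝ, ShPerfect (Pf a)) ∧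
      (∀ a : ℝ, ∀ k : Fin (n + 1), DenseInP (Y k) (Pf a)) ∧
      ∀ a b : ℝ, a ≠ b → Pf a ∩ Pf b ⊆ ⋃ k, Y k := by
  obtain ⟨ι, hι⟩ := Shelah76.exists_real_embedding
  refine ⟨fun t => Shelah76.PA P Y hP hdense (ι t),
    fun t => Shelah76.PA_perfect P Y hP hdense (ι t),
    fun t k => Shelah76.PA_dense P Y hP hdense (ι t) k, ?_⟩
  intro a b hab
  apply Shelah76.PA_sep P Y hP hdense (ι a) (ι b)
  have hne : ι a ≠ ι b := fun h => hab (hι h)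
  exact Function.ne_iff.mp hne
end

section
/- (Ordered-sum composition theorem, basic case.) If M₁ = Σ_{i∈N} M_i¹ and M₂ = Σ_{i∈N} M_i² are ordered sums of linear orders over the same index linear order N, and for every i ∈ N the summands M_i¹ and M_i² satisfy the same monadic second-order sentences of quantifier depth ≤ n (with respect to a fixed finite signature of unary predicates), then M₁ and M₂ satisfy the same monadic second-order sentences of quantifier depth ≤ n. -/
/-- Monadic second-order formulas over a linear order with `m` unary predicates,
`k` free element variables and `l` free set variables (de Bruijn indexed). -/
inductive MSO (m : ℕ) : ℕ → ℕ → Type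
  | lt {k l : ℕ} (i j : Fin k) : MSO m k l
  | eq {k l : ℕ} (i j : Fin k) : MSO m k l
  | mem {k l : ℕ} (i : Fin k) (X : Fin l) : MSO m k l
  | pred {k l : ℕ} (p : Fin m) (i : Fin k) : MSO m k l
  | not {k l : ℕ} (φ : MSO m k l) : MSO m k l
  | and {k l : ℕ} (φ ψ : MSO m k l) : MSO m k l
  | exElem {k l : ℕ} (φ : MSO m (k + 1) l) : MSO m k l
  | exSet {k l : ℕ} (φ : MSO m k (l + 1)) : MSO m k l

/-- Satisfaction of an MSO formula in a linear order `α` with unary predicates `P`. -/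
def MSO.Sat {m : ℕ} {α : Type*} [LinearOrder α] (P : Fin m → Set α) :
    ∀ {k l : ℕ}, MSO m k l → (Fin k → α) → (Fin l → Set α) → Prop
  | _, _, .lt i j, e, _ => e i < e j
  | _, _, .eq i j, e, _ => e i = e j
  | _, _, .mem i X, e, s => e i ∈ s X
  | _, _, .pred p i, e, _ => e i ∈ P p
  | _, _, .not φ, e, s => ¬ φ.Sat P e s
  | _, _, .and φ ψ, e, s => φ.Sat P e s ∧ ψ.Sat P e s
  | _, _, .exElem φ, e, s => ∃ a : α, φ.Sat P (Fin.cons a e) s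
  | _, _, .exSet φ, e, s => ∃ A : Set α, φ.Sat P e (Fin.cons A s)

/-- Quantifier depth of an MSO formula. -/
def MSO.depth {m : ℕ} : ∀ {k l : ℕ}, MSO m k l → ℕ
  | _, _, .not φ => φ.depth
  | _, _, .and φ ψ => max φ.depth ψ.depth
  | _, _, .exElem φ => φ.depth + 1
  | _, _, .exSet φ => φ.depth + 1
  | _, _, _ => 0

/-- Satisfaction of an MSO sentence (no free variables). -/
def MSO.SatS {m : ℕ} {α : Type*} [LinearOrder α] (P : Fin m → Set α) (φ : MSO m 0 0) : Prop :=
  φ.Sat P (fun i => i.elim0) (fun i => i.elim0)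

/-!
Call two positions (tuples of elements and of sets, possibly in different structures)
`n`-equivalent if they satisfy the same formulas of depth `≤ n`. Since there are only finitely
many formulas of depth `≤ n` up to equivalence, `(n + 1)`-equivalence has the back-and-forth
property: an element or a set added on one side can be matched on the other side keeping
`n`-equivalence, by a witness of the characteristic conjunction of the added one.

In the ordered sums, positions whose elements lie in the same summands and whose slices in every
summand are `n`-equivalent are themselves `n`-equivalent: atomic formulas are decided by the
summand indices or inside one summand, an element quantifier is matched inside the summand of
its witness, and a set quantifier is matched summand by summand, since a subset of the sum is
the union of its slices.
-/

theorem Sigma.Lex.toLex_mk_lt_toLex_mk {ι : Type*} {α : ι → Type*} [Preorder ι] [∀ i, LT (α i)]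
    {i : ι} {x y : α i} : toLex (⟨i, x⟩ : Σ i, α i) < toLex ⟨i, y⟩ ↔ x < y := by
  rw [Sigma.Lex.lt_def]
  exact ⟨fun h => h.elim (fun h => absurd h (lt_irrefl i)) (fun ⟨_, h⟩ => h),
    fun h => .inr ⟨rfl, h⟩⟩

theorem Sigma.Lex.lt_iff_of_fst_ne {ι : Type*} {α : ι → Type*} [LT ι] [∀ i, LT (α i)]
    {a b : Σₗ i, α i} (h : (ofLex a).1 ≠ (ofLex b).1) : a < b ↔ (ofLex a).1 < (ofLex b).1 := by
  rw [Sigma.Lex.lt_def]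
  exact or_iff_left fun ⟨h', _⟩ => h h'

namespace MSO

variable {m : ℕ}

section Equivalence

variable {α β : Type*} [LinearOrder α] [LinearOrder β] {k l n : ℕ}
  {P : Fin m → Set α} {e : Fin k → α} {s : Fin l → Set α}
  {Q : Fin m → Set β} {f : Fin k → β} {t : Fin l → Set β}

def EquivUpTo (n : ℕ) (P : Fin m → Set α) (e : Fin k → α) (s : Fin l → Set α)
    (Q : Fin m → Set β) (f : Fin k → β) (t : Fin l → Set β) : Prop :=
  ∀ φ : MSO m k l, φ.depth ≤ n → (φ.Sat P e s ↔ φ.Sat Q f t)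

theorem EquivUpTo.mono {n' : ℕ} (h : EquivUpTo n P e s Q f t) (hn : n' ≤ n) :
    EquivUpTo n' P e s Q f t :=
  fun φ hφ => h φ (hφ.trans hn)

theorem EquivUpTo.symm (h : EquivUpTo n P e s Q f t) : EquivUpTo n Q f t P e s :=
  fun φ hφ => (h φ hφ).symm

def atoms (m k l : ℕ) : List (MSO m k l) :=
  (List.finRange k).flatMap fun i =>
    (List.finRange k).flatMap (fun j => [lt i j, eq i j]) ++
      (List.finRange l).map (mem i) ++ (List.finRange m).map (pred · i)

theorem depth_eq_zero_of_mem_atoms {φ : MSO m k l} (hφ : φ ∈ atoms m k l) : φ.depth = 0 := by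
  simp only [atoms, List.mem_flatMap, List.mem_append, List.mem_map, List.mem_cons,
    List.mem_finRange, true_and, List.not_mem_nil, or_false] at hφ
  obtain ⟨i, (⟨j, rfl | rfl⟩ | ⟨X, rfl⟩) | ⟨p, rfl⟩⟩ := hφ <;> rfl

/-- Formulas of depth `≤ n` are boolean combinations of atoms and of existential
quantifications of formulas of depth `< n`. -/
theorem equivUpTo_of_agree_atoms
    (hatom : ∀ φ ∈ atoms m k l, (φ.Sat P e s ↔ φ.Sat Q f t))
    (helem : ∀ ψ : MSO m (k + 1) l, ψ.depth + 1 ≤ n → (ψ.exElem.Sat P e s ↔ ψ.exElem.Sat Q f t))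
    (hset : ∀ ψ : MSO m k (l + 1), ψ.depth + 1 ≤ n → (ψ.exSet.Sat P e s ↔ ψ.exSet.Sat Q f t)) :
    EquivUpTo n P e s Q f t := by
  intro φ hφ
  induction φ with
  | lt i j => exact hatom _ (by simp [atoms])
  | eq i j => exact hatom _ (by simp [atoms])
  | mem i X => exact hatom _ (by simp [atoms])
  | pred p i => exact hatom _ (by simp [atoms])
  | not ψ ih => exact not_congr (ih hatom helem hset hφ)
  | and ψ χ ihψ ihχ =>
    exact and_congr (ihψ hatom helem hset (le_of_max_le_left hφ))
      (ihχ hatom helem hset (le_of_max_le_right hφ))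
  | exElem ψ => exact helem ψ hφ
  | exSet ψ => exact hset ψ hφ

def signedConjs : List (MSO m k l) → List (MSO m k l)
  | [] => []
  | [φ] => [φ, φ.not]
  | φ :: ψ :: L => (signedConjs (ψ :: L)).flatMap fun χ => [φ.and χ, φ.not.and χ]

theorem depth_le_of_mem_signedConjs {L : List (MSO m k l)} (hL : ∀ φ ∈ L, φ.depth ≤ n)
    {χ : MSO m k l} (hχ : χ ∈ signedConjs L) : χ.depth ≤ n := by
  induction L using signedConjs.induct generalizing χ with
  | case1 => simp [signedConjs] at hχ
  | case2 φ =>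
    simp only [signedConjs, List.mem_cons, List.not_mem_nil, or_false] at hχ
    rcases hχ with rfl | rfl <;> simpa only [MSO.depth] using hL _ List.mem_cons_self
  | case3 φ ψ L ih =>
    simp only [signedConjs, List.mem_flatMap, List.mem_cons, List.not_mem_nil, or_false] at hχ
    obtain ⟨χ', hχ', rfl | rfl⟩ := hχ <;>
      exact max_le (hL φ List.mem_cons_self) (ih (fun φ' h => hL φ' (.tail _ h)) hχ')

theorem exists_mem_signedConjs_sat {L : List (MSO m k l)} (hL : L ≠ []) (P : Fin m → Set α)
    (e : Fin k → α) (s : Fin l → Set α) : ∃ χ ∈ signedConjs L, χ.Sat P e s := by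
  induction L using signedConjs.induct with
  | case1 => exact absurd rfl hL
  | case2 φ =>
    by_cases h : φ.Sat P e s
    · exact ⟨φ, by simp [signedConjs], h⟩
    · exact ⟨φ.not, by simp [signedConjs], h⟩
  | case3 φ ψ L ih =>
    obtain ⟨χ, hχ, hsat⟩ := ih (List.cons_ne_nil ψ L)
    by_cases h : φ.Sat P e s
    · exact ⟨φ.and χ, List.mem_flatMap.2 ⟨χ, hχ, by simp⟩, h, hsat⟩
    · exact ⟨φ.not.and χ, List.mem_flatMap.2 ⟨χ, hχ, by simp⟩, h, hsat⟩

theorem agree_of_mem_signedConjs {L : List (MSO m k l)} {χ : MSO m k l}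
    (hχ : χ ∈ signedConjs L) (h₁ : χ.Sat P e s) (h₂ : χ.Sat Q f t) :
    ∀ φ ∈ L, (φ.Sat P e s ↔ φ.Sat Q f t) := by
  induction L using signedConjs.induct generalizing χ with
  | case1 => simp [signedConjs] at hχ
  | case2 φ =>
    simp only [signedConjs, List.mem_cons, List.not_mem_nil, or_false] at hχ
    rcases hχ with rfl | rfl <;> simp_all [MSO.Sat]
  | case3 φ ψ L ih =>
    simp only [signedConjs, List.mem_flatMap, List.mem_cons, List.not_mem_nil, or_false] at hχ
    obtain ⟨χ', hχ', rfl | rfl⟩ := hχ <;>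
    · intro φ' hφ'
      rcases List.mem_cons.1 hφ' with rfl | hφ'
      · simp_all [MSO.Sat]
      · exact ih hχ' h₁.2 h₂.2 φ' hφ'

theorem exists_cons_agree {L : List (MSO m (k + 1) l)} (hL : L ≠ [])
    (h : ∀ χ ∈ signedConjs L, (χ.exElem.Sat P e s ↔ χ.exElem.Sat Q f t)) (a : α) :
    ∃ b, ∀ φ ∈ L, (φ.Sat P (Fin.cons a e) s ↔ φ.Sat Q (Fin.cons b f) t) := by
  obtain ⟨χ, hχ, ha⟩ := exists_mem_signedConjs_sat hL P (Fin.cons a e) s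
  obtain ⟨b, hb⟩ := (h χ hχ).1 ⟨a, ha⟩
  exact ⟨b, agree_of_mem_signedConjs hχ ha hb⟩

theorem exists_consSet_agree {L : List (MSO m k (l + 1))}
    (h : ∀ χ ∈ signedConjs L, (χ.exSet.Sat P e s ↔ χ.exSet.Sat Q f t)) (A : Set α) :
    ∃ B, ∀ φ ∈ L, (φ.Sat P e (Fin.cons A s) ↔ φ.Sat Q f (Fin.cons B t)) := by
  rcases eq_or_ne L [] with rfl | hL
  · exact ⟨∅, by simp⟩
  obtain ⟨χ, hχ, hA⟩ := exists_mem_signedConjs_sat hL P e (Fin.cons A s)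
  obtain ⟨B, hB⟩ := (h χ hχ).1 ⟨A, hA⟩
  exact ⟨B, agree_of_mem_signedConjs hχ hA hB⟩

def separatingFormulas : ℕ → (k l : ℕ) → List (MSO m k l)
  | 0, k, l => atoms m k l
  | n + 1, k, l => atoms m k l ++ (signedConjs (separatingFormulas n (k + 1) l)).map exElem ++
      (signedConjs (separatingFormulas n k (l + 1))).map exSet

theorem depth_le_of_mem_separatingFormulas :
    ∀ {n k l : ℕ} {φ : MSO m k l}, φ ∈ separatingFormulas n k l → φ.depth ≤ n
  | 0, k, l, φ, hφ => (depth_eq_zero_of_mem_atoms hφ).le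
  | n + 1, k, l, φ, hφ => by
    simp only [separatingFormulas, List.mem_append, List.mem_map] at hφ
    obtain (hφ | ⟨χ, hχ, rfl⟩) | ⟨χ, hχ, rfl⟩ := hφ
    · simp [depth_eq_zero_of_mem_atoms hφ]
    all_goals
      exact Nat.succ_le_succ <|
        depth_le_of_mem_signedConjs (fun _ => depth_le_of_mem_separatingFormulas) hχ

theorem depth_le_of_mem_signedConjs_separatingFormulas {χ : MSO m k l}
    (hχ : χ ∈ signedConjs (separatingFormulas n k l)) : χ.depth ≤ n :=
  depth_le_of_mem_signedConjs (fun _ => depth_le_of_mem_separatingFormulas) hχ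

theorem separatingFormulas_ne_nil (n k l : ℕ) : separatingFormulas (m := m) n (k + 1) l ≠ [] := by
  cases n <;> simp [separatingFormulas, atoms]

theorem equivUpTo_of_agree_separatingFormulas :
    ∀ {n k l : ℕ} {e : Fin k → α} {s : Fin l → Set α} {f : Fin k → β} {t : Fin l → Set β},
    (∀ φ ∈ separatingFormulas n k l, (φ.Sat P e s ↔ φ.Sat Q f t)) → EquivUpTo n P e s Q f t
  | 0, k, l, e, s, f, t, h => equivUpTo_of_agree_atoms h (by simp) (by simp)
  | n + 1, k, l, e, s, f, t, h => by
    have helem : ∀ χ ∈ signedConjs (separatingFormulas n (k + 1) l),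
        (χ.exElem.Sat P e s ↔ χ.exElem.Sat Q f t) :=
      fun χ hχ => h _ (by simp [separatingFormulas, hχ])
    have hset : ∀ χ ∈ signedConjs (separatingFormulas n k (l + 1)),
        (χ.exSet.Sat P e s ↔ χ.exSet.Sat Q f t) :=
      fun χ hχ => h _ (by simp [separatingFormulas, hχ])
    refine equivUpTo_of_agree_atoms (fun φ hφ => h φ (by simp [separatingFormulas, hφ])) ?_ ?_
    · intro ψ hψ
      constructor
      · rintro ⟨a, ha⟩
        obtain ⟨b, hb⟩ := exists_cons_agree (separatingFormulas_ne_nil n k l) helem a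
        exact ⟨b, (equivUpTo_of_agree_separatingFormulas hb ψ (Nat.le_of_succ_le_succ hψ)).1 ha⟩
      · rintro ⟨b, hb⟩
        obtain ⟨a, ha⟩ :=
          exists_cons_agree (separatingFormulas_ne_nil n k l) (fun χ hχ => (helem χ hχ).symm) b
        exact ⟨a, (equivUpTo_of_agree_separatingFormulas (fun φ hφ => (ha φ hφ).symm) ψ
          (Nat.le_of_succ_le_succ hψ)).2 hb⟩
    · intro ψ hψ
      constructor
      · rintro ⟨A, hA⟩
        obtain ⟨B, hB⟩ := exists_consSet_agree hset A
        exact ⟨B, (equivUpTo_of_agree_separatingFormulas hB ψ (Nat.le_of_succ_le_succ hψ)).1 hA⟩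
      · rintro ⟨B, hB⟩
        obtain ⟨A, hA⟩ := exists_consSet_agree (fun χ hχ => (hset χ hχ).symm) B
        exact ⟨A, (equivUpTo_of_agree_separatingFormulas (fun φ hφ => (hA φ hφ).symm) ψ
          (Nat.le_of_succ_le_succ hψ)).2 hB⟩

theorem EquivUpTo.exists_cons (h : EquivUpTo (n + 1) P e s Q f t) (a : α) :
    ∃ b, EquivUpTo n P (Fin.cons a e) s Q (Fin.cons b f) t := by
  obtain ⟨b, hb⟩ := exists_cons_agree (separatingFormulas_ne_nil n k l)
    (fun χ hχ => h χ.exElem <| Nat.succ_le_succ <|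
      depth_le_of_mem_signedConjs_separatingFormulas hχ) a
  exact ⟨b, equivUpTo_of_agree_separatingFormulas hb⟩

theorem EquivUpTo.exists_consSet (h : EquivUpTo (n + 1) P e s Q f t) (A : Set α) :
    ∃ B, EquivUpTo n P e (Fin.cons A s) Q f (Fin.cons B t) := by
  obtain ⟨B, hB⟩ := exists_consSet_agree
    (fun χ hχ => h χ.exSet <| Nat.succ_le_succ <|
      depth_le_of_mem_signedConjs_separatingFormulas hχ) A
  exact ⟨B, equivUpTo_of_agree_separatingFormulas hB⟩

end Equivalence

section OrderedSum

variable {N : Type*} {M₁ M₂ : N → Type*} {k l n c : ℕ}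
  {e₁ : Fin k → Σₗ i, M₁ i} {e₂ : Fin k → Σₗ i, M₂ i}

def sumPreds {M : N → Type*} (P : ∀ i, Fin m → Set (M i)) : Fin m → Set (Σₗ i, M i) :=
  fun p => {x | (ofLex x).2 ∈ P (ofLex x).1 p}

def slice {M : N → Type*} (s : Fin l → Set (Σₗ i, M i)) (i : N) : Fin l → Set (M i) :=
  fun X => {x | toLex ⟨i, x⟩ ∈ s X}

theorem slice_cons {M : N → Type*} (A : Set (Σₗ i, M i)) (s : Fin l → Set (Σₗ i, M i)) (i : N) :
    slice (Fin.cons A s) i = Fin.cons {x | toLex ⟨i, x⟩ ∈ A} (slice s i) := by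
  funext X
  exact Fin.cases rfl (fun _ => rfl) X

/-- `σ` enumerates, possibly with repetitions, the variables that `e₁` places in summand `i`;
`x₁` and `x₂` are the corresponding entries of `e₁` and `e₂` inside that summand. -/
def IsSlice (e₁ : Fin k → Σₗ i, M₁ i) (e₂ : Fin k → Σₗ i, M₂ i) (i : N) (σ : Fin c → Fin k)
    (x₁ : Fin c → M₁ i) (x₂ : Fin c → M₂ i) : Prop :=
  (∀ r, e₁ (σ r) = toLex ⟨i, x₁ r⟩ ∧ e₂ (σ r) = toLex ⟨i, x₂ r⟩) ∧
    ∀ j, (ofLex (e₁ j)).1 = i → ∃ r, σ r = j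

section IsSlice

variable {i : N} {σ : Fin c → Fin k} {x₁ : Fin c → M₁ i} {x₂ : Fin c → M₂ i}

theorem IsSlice.symm (hidx : ∀ j, (ofLex (e₁ j)).1 = (ofLex (e₂ j)).1)
    (h : IsSlice e₁ e₂ i σ x₁ x₂) : IsSlice e₂ e₁ i σ x₂ x₁ :=
  ⟨fun r => (h.1 r).symm, fun j hj => h.2 j ((hidx j).trans hj)⟩

theorem IsSlice.cons_self (h : IsSlice e₁ e₂ i σ x₁ x₂) (a : M₁ i) (b : M₂ i) :
    IsSlice (Fin.cons (toLex ⟨i, a⟩) e₁) (Fin.cons (toLex ⟨i, b⟩) e₂) i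
      (Fin.cons 0 (Fin.succ ∘ σ)) (Fin.cons a x₁) (Fin.cons b x₂) := by
  refine ⟨fun r => Fin.cases ⟨rfl, rfl⟩ (fun r => by simpa using h.1 r) r, fun j => ?_⟩
  refine Fin.cases (fun _ => ⟨0, rfl⟩) (fun j hj => ?_) j
  obtain ⟨r, rfl⟩ := h.2 j (by simpa using hj)
  exact ⟨r.succ, by simp⟩

theorem IsSlice.cons_of_ne (h : IsSlice e₁ e₂ i σ x₁ x₂) {a : Σₗ i, M₁ i} (ha : (ofLex a).1 ≠ i)
    (b : Σₗ i, M₂ i) : IsSlice (Fin.cons a e₁) (Fin.cons b e₂) i (Fin.succ ∘ σ) x₁ x₂ := by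
  refine ⟨fun r => by simpa using h.1 r, fun j => ?_⟩
  refine Fin.cases (fun h0 => absurd h0 ha) (fun j hj => ?_) j
  obtain ⟨r, rfl⟩ := h.2 j (by simpa using hj)
  exact ⟨r, rfl⟩

end IsSlice

variable [∀ i, LinearOrder (M₁ i)] [∀ i, LinearOrder (M₂ i)]
  {P₁ : ∀ i, Fin m → Set (M₁ i)} {s₁ : Fin l → Set (Σₗ i, M₁ i)}
  {P₂ : ∀ i, Fin m → Set (M₂ i)} {s₂ : Fin l → Set (Σₗ i, M₂ i)}

def SumEquivUpTo (n : ℕ) (P₁ : ∀ i, Fin m → Set (M₁ i)) (e₁ : Fin k → Σₗ i, M₁ i)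
    (s₁ : Fin l → Set (Σₗ i, M₁ i)) (P₂ : ∀ i, Fin m → Set (M₂ i)) (e₂ : Fin k → Σₗ i, M₂ i)
    (s₂ : Fin l → Set (Σₗ i, M₂ i)) : Prop :=
  (∀ j, (ofLex (e₁ j)).1 = (ofLex (e₂ j)).1) ∧
    ∀ i, ∃ (c : ℕ) (σ : Fin c → Fin k) (x₁ : Fin c → M₁ i) (x₂ : Fin c → M₂ i),
      IsSlice e₁ e₂ i σ x₁ x₂ ∧ EquivUpTo n (P₁ i) x₁ (slice s₁ i) (P₂ i) x₂ (slice s₂ i)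

theorem SumEquivUpTo.mono {n' : ℕ} (h : SumEquivUpTo n P₁ e₁ s₁ P₂ e₂ s₂) (hn : n' ≤ n) :
    SumEquivUpTo n' P₁ e₁ s₁ P₂ e₂ s₂ := by
  refine ⟨h.1, fun i => ?_⟩
  obtain ⟨c, σ, x₁, x₂, hσ, hx⟩ := h.2 i
  exact ⟨c, σ, x₁, x₂, hσ, hx.mono hn⟩

theorem SumEquivUpTo.symm (h : SumEquivUpTo n P₁ e₁ s₁ P₂ e₂ s₂) :
    SumEquivUpTo n P₂ e₂ s₂ P₁ e₁ s₁ := by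
  refine ⟨fun j => (h.1 j).symm, fun i => ?_⟩
  obtain ⟨c, σ, x₁, x₂, hσ, hx⟩ := h.2 i
  exact ⟨c, σ, x₂, x₁, hσ.symm h.1, hx.symm⟩

theorem SumEquivUpTo.exists_cons (h : SumEquivUpTo (n + 1) P₁ e₁ s₁ P₂ e₂ s₂)
    (a : Σₗ i, M₁ i) : ∃ b, SumEquivUpTo n P₁ (Fin.cons a e₁) s₁ P₂ (Fin.cons b e₂) s₂ := by
  obtain ⟨i₀, a₀⟩ := a
  obtain ⟨c, σ, x₁, x₂, hσ, hx⟩ := h.2 i₀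
  obtain ⟨b₀, hb₀⟩ := hx.exists_cons a₀
  refine ⟨toLex ⟨i₀, b₀⟩, Fin.forall_fin_succ.2 ⟨rfl, h.1⟩, fun i => ?_⟩
  rcases eq_or_ne i₀ i with rfl | hi
  · exact ⟨_, _, _, _, hσ.cons_self a₀ b₀, hb₀⟩
  · obtain ⟨c, σ, x₁, x₂, hσ, hx⟩ := h.2 i
    exact ⟨_, _, _, _, hσ.cons_of_ne (a := toLex ⟨i₀, a₀⟩) hi _, hx.mono n.le_succ⟩

theorem SumEquivUpTo.exists_consSet (h : SumEquivUpTo (n + 1) P₁ e₁ s₁ P₂ e₂ s₂)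
    (A : Set (Σₗ i, M₁ i)) : ∃ B, SumEquivUpTo n P₁ e₁ (Fin.cons A s₁) P₂ e₂ (Fin.cons B s₂) := by
  choose c σ x₁ x₂ hσ hx using h.2
  choose B hB using fun i => (hx i).exists_consSet {x | toLex ⟨i, x⟩ ∈ A}
  refine ⟨{y | (ofLex y).2 ∈ B (ofLex y).1}, h.1, fun i => ⟨c i, σ i, x₁ i, x₂ i, hσ i, ?_⟩⟩
  rw [slice_cons, slice_cons]
  exact hB i

theorem sumEquivUpTo_elim0
    (h : ∀ i, EquivUpTo n (P₁ i) Fin.elim0 Fin.elim0 (P₂ i) Fin.elim0 Fin.elim0) :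
    SumEquivUpTo n P₁ Fin.elim0 Fin.elim0 P₂ Fin.elim0 Fin.elim0 := by
  refine ⟨fun j => j.elim0, fun i => ⟨0, Fin.elim0, Fin.elim0, Fin.elim0,
    ⟨fun r => r.elim0, fun j => j.elim0⟩, ?_⟩⟩
  rw [Subsingleton.elim (slice _ i) Fin.elim0, Subsingleton.elim (slice _ i) Fin.elim0]
  exact h i

theorem SumEquivUpTo.equivUpTo [LinearOrder N] (h : SumEquivUpTo n P₁ e₁ s₁ P₂ e₂ s₂) :
    EquivUpTo n (sumPreds P₁) e₁ s₁ (sumPreds P₂) e₂ s₂ := by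
  intro φ hφ
  induction φ generalizing n with
  | lt i j =>
    show e₁ i < e₁ j ↔ e₂ i < e₂ j
    rcases eq_or_ne (ofLex (e₁ i)).1 (ofLex (e₁ j)).1 with hij | hij
    · generalize hu : (ofLex (e₁ j)).1 = u at hij
      obtain ⟨c, σ, x₁, x₂, hσ, hx⟩ := h.2 u
      obtain ⟨r, rfl⟩ := hσ.2 i hij
      obtain ⟨r', rfl⟩ := hσ.2 j hu
      rw [(hσ.1 r).1, (hσ.1 r).2, (hσ.1 r').1, (hσ.1 r').2]
      simpa only [Sigma.Lex.toLex_mk_lt_toLex_mk, MSO.Sat] using hx (.lt r r') n.zero_le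
    · rw [Sigma.Lex.lt_iff_of_fst_ne hij, Sigma.Lex.lt_iff_of_fst_ne (by rwa [← h.1 i, ← h.1 j]),
        h.1 i, h.1 j]
  | eq i j =>
    show e₁ i = e₁ j ↔ e₂ i = e₂ j
    rcases eq_or_ne (ofLex (e₁ i)).1 (ofLex (e₁ j)).1 with hij | hij
    · generalize hu : (ofLex (e₁ j)).1 = u at hij
      obtain ⟨c, σ, x₁, x₂, hσ, hx⟩ := h.2 u
      obtain ⟨r, rfl⟩ := hσ.2 i hij
      obtain ⟨r', rfl⟩ := hσ.2 j hu
      rw [(hσ.1 r).1, (hσ.1 r).2, (hσ.1 r').1, (hσ.1 r').2]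
      simpa [MSO.Sat] using hx (.eq r r') n.zero_le
    · have hij' : (ofLex (e₂ i)).1 ≠ (ofLex (e₂ j)).1 := by rwa [← h.1 i, ← h.1 j]
      exact iff_of_false (fun h' => hij (congrArg (·.1) h')) (fun h' => hij' (congrArg (·.1) h'))
  | mem j X =>
    obtain ⟨c, σ, x₁, x₂, hσ, hx⟩ := h.2 (ofLex (e₁ j)).1
    obtain ⟨r, hr⟩ := hσ.2 j rfl
    show e₁ j ∈ s₁ X ↔ e₂ j ∈ s₂ X
    rw [← hr, (hσ.1 r).1, (hσ.1 r).2]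
    exact hx (.mem r X) n.zero_le
  | pred p j =>
    obtain ⟨c, σ, x₁, x₂, hσ, hx⟩ := h.2 (ofLex (e₁ j)).1
    obtain ⟨r, hr⟩ := hσ.2 j rfl
    show e₁ j ∈ sumPreds P₁ p ↔ e₂ j ∈ sumPreds P₂ p
    rw [← hr, (hσ.1 r).1, (hσ.1 r).2]
    exact hx (.pred p r) n.zero_le
  | not ψ ih => exact not_congr (ih h hφ)
  | and ψ χ ihψ ihχ =>
    exact and_congr (ihψ h (le_of_max_le_left hφ)) (ihχ h (le_of_max_le_right hφ))
  | exElem ψ ih =>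
    replace h := h.mono hφ
    constructor
    · rintro ⟨a, ha⟩
      obtain ⟨b, hb⟩ := h.exists_cons a
      exact ⟨b, (ih hb le_rfl).1 ha⟩
    · rintro ⟨b, hb⟩
      obtain ⟨a, ha⟩ := h.symm.exists_cons b
      exact ⟨a, (ih ha.symm le_rfl).2 hb⟩
  | exSet ψ ih =>
    replace h := h.mono hφ
    constructor
    · rintro ⟨A, hA⟩
      obtain ⟨B, hB⟩ := h.exists_consSet A
      exact ⟨B, (ih hB le_rfl).1 hA⟩
    · rintro ⟨B, hB⟩
      obtain ⟨A, hA⟩ := h.symm.exists_consSet B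
      exact ⟨A, (ih hA.symm le_rfl).2 hB⟩

end OrderedSum

end MSO

/-- (Shelah, Lemma 2.3(A), basic composition theorem for ordered sums.) If two ordered
sums over the same index order `N` have summands that are pairwise equivalent for
monadic sentences of quantifier depth `≤ n`, then the sums are equivalent for monadic
sentences of quantifier depth `≤ n`. -/
theorem ordered_sum_composition
    (N : Type) [LinearOrder N] (m n : ℕ)
    (M₁ M₂ : N → Type) [∀ i, LinearOrder (M₁ i)] [∀ i, LinearOrder (M₂ i)]
    (P₁ : ∀ i, Fin m → Set (M₁ i)) (P₂ : ∀ i, Fin m → Set (M₂ i))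
    (h : ∀ i : N, ∀ φ : MSO m 0 0, φ.depth ≤ n →
      (MSO.SatS (P₁ i) φ ↔ MSO.SatS (P₂ i) φ)) :
    ∀ φ : MSO m 0 0, φ.depth ≤ n →
      (MSO.SatS (α := Σₗ i, M₁ i)
          (fun k => {x : Σₗ i, M₁ i | (ofLex x).2 ∈ P₁ (ofLex x).1 k}) φ ↔
       MSO.SatS (α := Σₗ i, M₂ i)
          (fun k => {x : Σₗ i, M₂ i | (ofLex x).2 ∈ P₂ (ofLex x).1 k}) φ) := by
  exact (MSO.sumEquivUpTo_elim0 h).equivUpTo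
end
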